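/- arXiv:2404.13703 — 4 statements merged into one kernel-verified Lean document; each statement's English description precedes it below -/
import Mathlib

section
/- Let (Q,Ñ) be a classical solution of the relaxed system on [0,∞), and suppose additionally that K'(φ) ≤ 0 for all φ ∈ ℝ. Then for all τ ≥ 0: min_{η∈[0,1]} H_init(η) ≤ Ñ(τ) ≤ max_{η∈[0,1]} H_init(η), where H_init(η) := Q_init'(η) − K(Q_init(η)). -/
open Real Set MeasureTheory Filter Topology
open scoped ENNReal

noncomputable section

/-- The time interval `[0, T)` in `ℝ`, where `T : ℝ≥0∞` may be `∞`. -/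
def Ico0 (T : ℝ≥0∞) : Set ℝ := {τ : ℝ | 0 ≤ τ ∧ ENNReal.ofReal τ < T}

/-- Partial derivative in the time variable (one-sided at `τ = 0`). -/
def pdTau (Q : ℝ → ℝ → ℝ) (τ η : ℝ) : ℝ := derivWithin (fun s => Q s η) (Ici 0) τ

/-- Partial derivative in the spatial variable (one-sided at `η = 0` and `η = 1`). -/
def pdEta (Q : ℝ → ℝ → ℝ) (τ η : ℝ) : ℝ := derivWithin (fun x => Q τ x) (Icc 0 1) η

/-- Assumption 1.1: `K ∈ C²(ℝ)` with `K'`, `K''` bounded on `ℝ` and `K > 0` on `[0, Φ_F]`. -/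
structure KAssump (K : ℝ → ℝ) (ΦF : ℝ) : Prop where
  smooth : ContDiff ℝ 2 K
  bdd1 : ∃ C : ℝ, ∀ x : ℝ, |deriv K x| ≤ C
  bdd2 : ∃ C : ℝ, ∀ x : ℝ, |deriv (deriv K) x| ≤ C
  pos : ∀ φ ∈ Icc (0 : ℝ) ΦF, 0 < K φ

/-- `k_min := K'(0) + ∫₀^{Φ_F} min(K''(φ), 0) dφ`. -/
def kmin (K : ℝ → ℝ) (ΦF : ℝ) : ℝ :=
  deriv K 0 + ∫ φ in (0 : ℝ)..ΦF, min (deriv (deriv K) φ) 0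

/-- `k_max := K'(0) + ∫₀^{Φ_F} max(K''(φ), 0) dφ`. -/
def kmax (K : ℝ → ℝ) (ΦF : ℝ) : ℝ :=
  deriv K 0 + ∫ φ in (0 : ℝ)..ΦF, max (deriv (deriv K) φ) 0

/-- Assumption (A2) on the initial datum. -/
structure A2 (K : ℝ → ℝ) (ΦF : ℝ) (Qinit : ℝ → ℝ) : Prop where
  reg : ContDiffOn ℝ 1 Qinit (Icc 0 1)
  mono : MonotoneOn Qinit (Icc 0 1)
  init0 : Qinit 0 = 0
  init1 : Qinit 1 = ΦF
  deriv1 : K ΦF < derivWithin Qinit (Icc 0 1) 1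
  compat : derivWithin Qinit (Icc 0 1) 1 - derivWithin Qinit (Icc 0 1) 0 = K ΦF - K 0

/-- A classical solution `(Q, N)` of the Q-system on `[0, T)` with initial datum `Qinit`. -/
structure IsQSol (K : ℝ → ℝ) (ΦF : ℝ) (T : ℝ≥0∞) (Qinit : ℝ → ℝ)
    (Q : ℝ → ℝ → ℝ) (N : ℝ → ℝ) : Prop where
  initReg : ContDiffOn ℝ 1 Qinit (Icc 0 1)
  initMono : MonotoneOn Qinit (Icc 0 1)
  init0 : Qinit 0 = 0
  init1 : Qinit 1 = ΦF
  initDeriv : K ΦF < derivWithin Qinit (Icc 0 1) 1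
  reg : ContDiffOn ℝ 1 (Function.uncurry Q) (Ico0 T ×ˢ Icc (0 : ℝ) 1)
  mono : ∀ τ ∈ Ico0 T, MonotoneOn (Q τ) (Icc 0 1)
  Ncont : ContinuousOn N (Ico0 T)
  Npos : ∀ τ ∈ Ico0 T, 0 < N τ
  pde : ∀ τ ∈ Ico0 T, ∀ η ∈ Ioo (0 : ℝ) 1,
    pdTau Q τ η + pdEta Q τ η = 1 / N τ + K (Q τ η)
  bc : ∀ τ ∈ Ico0 T, Q τ 0 = 0
  Ndef : ∀ τ ∈ Ico0 T, 1 / N τ = pdEta Q τ 1 - K ΦF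
  init : ∀ η ∈ Icc (0 : ℝ) 1, Q 0 η = Qinit η
  constraint : ∀ τ ∈ Ico0 T, K ΦF < pdEta Q τ 1

/-- A classical solution `(Q, Ñ)` of the relaxed system on `[0, T)` with initial datum `Qinit`,
where `Ñ` is unconstrained in sign. -/
structure IsRelaxedSol (K : ℝ → ℝ) (ΦF : ℝ) (T : ℝ≥0∞) (Qinit : ℝ → ℝ)
    (Q : ℝ → ℝ → ℝ) (Ntil : ℝ → ℝ) : Prop where
  initReg : ContDiffOn ℝ 1 Qinit (Icc 0 1)
  init0 : Qinit 0 = 0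
  init1 : Qinit 1 = ΦF
  reg : ContDiffOn ℝ 1 (Function.uncurry Q) (Ico0 T ×ˢ Icc (0 : ℝ) 1)
  Ncont : ContinuousOn Ntil (Ico0 T)
  pde : ∀ τ ∈ Ico0 T, ∀ η ∈ Ioo (0 : ℝ) 1,
    pdTau Q τ η + pdEta Q τ η = Ntil τ + K (Q τ η)
  bc : ∀ τ ∈ Ico0 T, Q τ 0 = 0
  Ndef : ∀ τ ∈ Ico0 T, Ntil τ = pdEta Q τ 1 - K ΦF
  init : ∀ η ∈ Icc (0 : ℝ) 1, Q 0 η = Qinit η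

/-- A steady state `(Q*, N*)` of the Q-system. -/
def IsSteadyState (K : ℝ → ℝ) (ΦF : ℝ) (Qs : ℝ → ℝ) (Ns : ℝ) : Prop :=
  ContDiffOn ℝ 1 Qs (Icc 0 1) ∧ 0 < Ns ∧
    (∀ η ∈ Icc (0 : ℝ) 1, derivWithin Qs (Icc 0 1) η = K (Qs η) + 1 / Ns) ∧
    Qs 0 = 0 ∧ Qs 1 = ΦF

/-- `P₀ f := f - ∫₀¹ f`. -/
def P0 (f : ℝ → ℝ) (η : ℝ) : ℝ := f η - ∫ x in (0 : ℝ)..1, f x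

/-- `H_init := Q_init' - K ∘ Q_init` (derivative within `[0,1]`). -/
def Hinit (K : ℝ → ℝ) (Qinit : ℝ → ℝ) (η : ℝ) : ℝ :=
  derivWithin Qinit (Icc 0 1) η - K (Qinit η)


/-!
Along a characteristic `η = c + τ` the quantity `H = ∂_η Q - K(Q)` solves the linear equation
`H' = K'(Q) (H - Ñ)`. As `K' ≤ 0`, the integrating factor `exp (-∫ K'(Q))` shows that `H` cannot
cross a level `B` that bounds `Ñ` from above (resp. below) along the characteristic.
At `η = 1` we have `Q = Φ_F` (Grönwall), so `H = Ñ`; at `η = 0` the boundary condition gives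
`H = Ñ` again, and at `τ = 0` we have `H = H_init`. Hence `Ñ(τ)` is controlled by the value of `H`
where the characteristic through `(τ, 1)` enters the strip, namely `H_init(1 - τ)` or `Ñ(τ - 1)`.
If `Ñ` exceeded `max H_init`, this would fail at the first time `Ñ` attains its maximum on
`[0, τ]`; the lower bound is symmetric.
-/

def halfStrip : Set (ℝ × ℝ) := Ici 0 ×ˢ Icc 0 1

lemma mk_mem_halfStrip {t x : ℝ} (ht : 0 ≤ t) (hx : x ∈ Icc 0 1) : (t, x) ∈ halfStrip :=
  ⟨ht, hx⟩

lemma uniqueDiffOn_halfStrip : UniqueDiffOn ℝ halfStrip :=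
  (uniqueDiffOn_Ici 0).prod (uniqueDiffOn_Icc zero_lt_one)

lemma Ico0_top : Ico0 ⊤ = Ici 0 := by
  ext; simp [Ico0]

section Regularity

variable {Q : ℝ → ℝ → ℝ} {t x c : ℝ}

lemma hasFDerivWithinAt_halfStrip (hQ : ContDiffOn ℝ 1 (Function.uncurry Q) halfStrip)
    {p : ℝ × ℝ} (hp : p ∈ halfStrip) :
    HasFDerivWithinAt (Function.uncurry Q)
      (fderivWithin ℝ (Function.uncurry Q) halfStrip p) halfStrip p :=
  (hQ.differentiableOn one_ne_zero p hp).hasFDerivWithinAt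

lemma hasDerivWithinAt_tau_fderivWithin (hQ : ContDiffOn ℝ 1 (Function.uncurry Q) halfStrip)
    (ht : 0 ≤ t) (hx : x ∈ Icc 0 1) :
    HasDerivWithinAt (fun s => Q s x)
      (fderivWithin ℝ (Function.uncurry Q) halfStrip (t, x) (1, 0)) (Ici 0) t :=
  (hasFDerivWithinAt_halfStrip hQ (mk_mem_halfStrip ht hx)).comp_hasDerivWithinAt (x := t)
    (f := fun s => (s, x)) ((hasDerivAt_id t).prodMk (hasDerivAt_const t x)).hasDerivWithinAt
    fun _ hs => mk_mem_halfStrip hs hx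

lemma hasDerivWithinAt_eta_fderivWithin (hQ : ContDiffOn ℝ 1 (Function.uncurry Q) halfStrip)
    (ht : 0 ≤ t) (hx : x ∈ Icc 0 1) :
    HasDerivWithinAt (Q t)
      (fderivWithin ℝ (Function.uncurry Q) halfStrip (t, x) (0, 1)) (Icc 0 1) x :=
  (hasFDerivWithinAt_halfStrip hQ (mk_mem_halfStrip ht hx)).comp_hasDerivWithinAt (x := x)
    (f := fun y => (t, y)) ((hasDerivAt_const x t).prodMk (hasDerivAt_id x)).hasDerivWithinAt
    fun _ hy => mk_mem_halfStrip ht hy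

lemma pdTau_eq_fderivWithin (hQ : ContDiffOn ℝ 1 (Function.uncurry Q) halfStrip)
    (ht : 0 ≤ t) (hx : x ∈ Icc 0 1) :
    pdTau Q t x = fderivWithin ℝ (Function.uncurry Q) halfStrip (t, x) (1, 0) :=
  (hasDerivWithinAt_tau_fderivWithin hQ ht hx).derivWithin (uniqueDiffOn_Ici 0 t ht)

lemma pdEta_eq_fderivWithin (hQ : ContDiffOn ℝ 1 (Function.uncurry Q) halfStrip)
    (ht : 0 ≤ t) (hx : x ∈ Icc 0 1) :
    pdEta Q t x = fderivWithin ℝ (Function.uncurry Q) halfStrip (t, x) (0, 1) :=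
  (hasDerivWithinAt_eta_fderivWithin hQ ht hx).derivWithin (uniqueDiffOn_Icc zero_lt_one x hx)

lemma hasDerivWithinAt_pdTau (hQ : ContDiffOn ℝ 1 (Function.uncurry Q) halfStrip)
    (ht : 0 ≤ t) (hx : x ∈ Icc 0 1) :
    HasDerivWithinAt (fun s => Q s x) (pdTau Q t x) (Ici 0) t :=
  pdTau_eq_fderivWithin hQ ht hx ▸ hasDerivWithinAt_tau_fderivWithin hQ ht hx

lemma hasDerivAt_pdEta (hQ : ContDiffOn ℝ 1 (Function.uncurry Q) halfStrip)
    (ht : 0 ≤ t) (hx : x ∈ Ioo 0 1) : HasDerivAt (Q t) (pdEta Q t x) x := by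
  rw [pdEta_eq_fderivWithin hQ ht (Ioo_subset_Icc_self hx)]
  exact (hasDerivWithinAt_eta_fderivWithin hQ ht (Ioo_subset_Icc_self hx)).hasDerivAt
    (Icc_mem_nhds hx.1 hx.2)

lemma continuousOn_pdTau (hQ : ContDiffOn ℝ 1 (Function.uncurry Q) halfStrip) :
    ContinuousOn (fun p : ℝ × ℝ => pdTau Q p.1 p.2) halfStrip :=
  ((hQ.continuousOn_fderivWithin uniqueDiffOn_halfStrip le_rfl).clm_apply
    continuousOn_const).congr fun _ hp => pdTau_eq_fderivWithin hQ hp.1 hp.2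

lemma continuousOn_pdEta (hQ : ContDiffOn ℝ 1 (Function.uncurry Q) halfStrip) :
    ContinuousOn (fun p : ℝ × ℝ => pdEta Q p.1 p.2) halfStrip :=
  ((hQ.continuousOn_fderivWithin uniqueDiffOn_halfStrip le_rfl).clm_apply
    continuousOn_const).congr fun _ hp => pdEta_eq_fderivWithin hQ hp.1 hp.2

lemma hasDerivAt_along_diagonal (hQ : ContDiffOn ℝ 1 (Function.uncurry Q) halfStrip)
    (ht : 0 < t) (hx : c + t ∈ Ioo 0 1) :
    HasDerivAt (fun s => Q s (c + s)) (pdTau Q t (c + t) + pdEta Q t (c + t)) t := by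
  have hp := mk_mem_halfStrip ht.le (Ioo_subset_Icc_self hx)
  have hD := ((hasFDerivWithinAt_halfStrip hQ hp).hasFDerivAt
    (prod_mem_nhds (Ici_mem_nhds ht) (Icc_mem_nhds hx.1 hx.2))).comp_hasDerivAt t
    ((hasDerivAt_id t).prodMk ((hasDerivAt_id t).const_add c))
  rw [pdTau_eq_fderivWithin hQ hp.1 hp.2, pdEta_eq_fderivWithin hQ hp.1 hp.2, ← map_add,
    Prod.mk_add_mk, add_zero, zero_add]
  exact hD

lemma continuousOn_along_diagonal {f : ℝ × ℝ → ℝ} (hf : ContinuousOn f halfStrip)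
    {c t₁ t₂ : ℝ} (h₁ : 0 ≤ t₁) (hc₁ : 0 ≤ c + t₁) (hc₂ : c + t₂ ≤ 1) :
    ContinuousOn (fun s => f (s, c + s)) (Icc t₁ t₂) :=
  hf.comp (continuousOn_id.prodMk (continuousOn_const.add continuousOn_id)) fun s hs =>
    mk_mem_halfStrip (h₁.trans hs.1) ⟨by linarith [hs.1], by linarith [hs.2]⟩

end Regularity

lemma lt_of_hasDerivAt_mul_sub {a f g : ℝ → ℝ} {t₀ t₁ B : ℝ} (h₀₁ : t₀ ≤ t₁)
    (ha : ContinuousOn a (Icc t₀ t₁)) (ha₀ : ∀ t ∈ Ioo t₀ t₁, a t ≤ 0)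
    (hf : ContinuousOn f (Icc t₀ t₁))
    (hf' : ∀ t ∈ Ioo t₀ t₁, HasDerivAt f (a t * (f t - g t)) t)
    (hg : ∀ t ∈ Ioo t₀ t₁, g t ≤ B) (hB : f t₀ < B) : f t₁ < B := by
  set A := fun t => ∫ s in t₀..t, a s
  have hA : ContinuousOn A (Icc t₀ t₁) := by
    have := intervalIntegral.continuousOn_primitive_interval (μ := volume)
      (ha.integrableOn_Icc.mono_set (uIcc_of_le h₀₁).subset)
    rwa [uIcc_of_le h₀₁] at this
  have hA' : ∀ t ∈ Ioo t₀ t₁, HasDerivAt A (a t) t := fun t ht =>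
    intervalIntegral.integral_hasDerivAt_right
      ((ha.mono (Icc_subset_Icc le_rfl ht.2.le)).intervalIntegrable_of_Icc ht.1.le)
      (ContinuousOn.stronglyMeasurableAtFilter isOpen_Ioo (ha.mono Ioo_subset_Icc_self) t ht)
      (ha.continuousAt (Icc_mem_nhds ht.1 ht.2))
  -- integrating factor: `((f - B) exp (-A))' = a (B - g) exp (-A) ≤ 0`
  have hanti : AntitoneOn (fun t => (f t - B) * exp (-A t)) (Icc t₀ t₁) := by
    refine antitoneOn_of_hasDerivWithinAt_nonpos (convex_Icc t₀ t₁)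
      ((hf.sub continuousOn_const).mul (continuous_exp.comp_continuousOn hA.neg))
      (f' := fun t => a t * (B - g t) * exp (-A t)) (fun t ht => ?_) (fun t ht => ?_)
    · rw [interior_Icc] at ht
      exact ((((hf' t ht).sub_const B).mul ((hA' t ht).neg.exp)).congr_deriv
        (by simp only [Pi.neg_apply]; ring)).hasDerivWithinAt
    · rw [interior_Icc] at ht
      exact mul_nonpos_of_nonpos_of_nonneg
        (mul_nonpos_of_nonpos_of_nonneg (ha₀ t ht) (sub_nonneg.2 (hg t ht))) (exp_pos _).le
  have hend := hanti (left_mem_Icc.2 h₀₁) (right_mem_Icc.2 h₀₁) h₀₁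
  simp only [A, intervalIntegral.integral_same, neg_zero, exp_zero, mul_one] at hend
  by_contra! hle
  linarith [mul_nonneg (sub_nonneg.2 hle) (exp_pos (-A t₁)).le]

lemma gt_of_hasDerivAt_mul_sub {a f g : ℝ → ℝ} {t₀ t₁ B : ℝ} (h₀₁ : t₀ ≤ t₁)
    (ha : ContinuousOn a (Icc t₀ t₁)) (ha₀ : ∀ t ∈ Ioo t₀ t₁, a t ≤ 0)
    (hf : ContinuousOn f (Icc t₀ t₁))
    (hf' : ∀ t ∈ Ioo t₀ t₁, HasDerivAt f (a t * (f t - g t)) t)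
    (hg : ∀ t ∈ Ioo t₀ t₁, B ≤ g t) (hB : B < f t₀) : B < f t₁ :=
  neg_lt_neg_iff.1 <| lt_of_hasDerivAt_mul_sub (f := -f) (g := -g) h₀₁ ha ha₀ hf.neg
    (fun t ht => ((hf' t ht).neg).congr_deriv (by simp only [Pi.neg_apply]; ring))
    (fun t ht => neg_le_neg (hg t ht)) (neg_lt_neg hB)

lemma le_of_transport_lt {N F : ℝ → ℝ} {M : ℝ} (hN : ContinuousOn N (Ici 0)) (hN₀ : N 0 ≤ M)
    (hF_early : ∀ τ ∈ Ioc (0 : ℝ) 1, F τ ≤ M) (hF_late : ∀ τ, 1 < τ → F τ = N (τ - 1))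
    (htransport : ∀ τ, 0 < τ → ∀ B, (∀ s ∈ Icc (max (τ - 1) 0) τ, N s ≤ B) → F τ < B → N τ < B)
    {τ : ℝ} (hτ : 0 ≤ τ) : N τ ≤ M := by
  by_contra! hMτ
  obtain ⟨σ, hσ, hσmax⟩ := isCompact_Icc.exists_isMaxOn (nonempty_Icc.2 hτ)
    (hN.mono Icc_subset_Ici_self)
  have hle : ∀ s ∈ Icc 0 τ, N s ≤ N σ := isMaxOn_iff.1 hσmax
  have hMσ : M < N σ := hMτ.trans_le (hle τ (right_mem_Icc.2 hτ))
  have hS : IsCompact (Icc 0 τ ∩ N ⁻¹' {N σ}) :=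
    isCompact_Icc.of_isClosed_subset ((hN.mono Icc_subset_Ici_self).preimage_isClosed_of_isClosed
      isClosed_Icc isClosed_singleton) inter_subset_left
  obtain ⟨ρ, ⟨hρ, hρσ⟩, hρmin⟩ := hS.exists_isLeast ⟨σ, hσ, rfl⟩
  have hbefore : ∀ s ∈ Icc 0 τ, s < ρ → N s < N σ := fun s hs hsρ =>
    (hle s hs).lt_of_ne fun h => (hρmin ⟨hs, h⟩).not_gt hsρ
  have hρ₀ : 0 < ρ := hρ.1.lt_of_ne <| by
    rintro rfl
    exact (hN₀.trans_lt hMσ).ne hρσ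
  refine (htransport ρ hρ₀ (N σ)
    (fun s hs => hle s ⟨(le_max_right _ _).trans hs.1, hs.2.trans hρ.2⟩) ?_).ne hρσ
  rcases le_or_gt ρ 1 with h1 | h1
  · exact (hF_early ρ ⟨hρ₀, h1⟩).trans_lt hMσ
  · rw [hF_late ρ h1]
    exact hbefore _ ⟨by linarith, by linarith [hρ.2]⟩ (by linarith)

lemma mem_Icc_of_transport {N F : ℝ → ℝ} {m M : ℝ} (hN : ContinuousOn N (Ici 0))
    (hN₀ : N 0 ∈ Icc m M) (hF_early : ∀ τ ∈ Ioc (0 : ℝ) 1, F τ ∈ Icc m M)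
    (hF_late : ∀ τ, 1 < τ → F τ = N (τ - 1))
    (hupper : ∀ τ, 0 < τ → ∀ B, (∀ s ∈ Icc (max (τ - 1) 0) τ, N s ≤ B) → F τ < B → N τ < B)
    (hlower : ∀ τ, 0 < τ → ∀ B, (∀ s ∈ Icc (max (τ - 1) 0) τ, B ≤ N s) → B < F τ → B < N τ)
    {τ : ℝ} (hτ : 0 ≤ τ) : N τ ∈ Icc m M :=
  ⟨neg_le_neg_iff.1 <| le_of_transport_lt (N := -N) (F := -F) hN.neg (neg_le_neg hN₀.1)
      (fun τ hτ => neg_le_neg (hF_early τ hτ).1) (fun τ hτ => by simp [hF_late τ hτ])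
      (fun τ hτ B hNB hFB => neg_lt.2 <| hlower τ hτ (-B) (fun s hs => neg_le.1 (hNB s hs))
        (neg_lt.1 hFB)) hτ,
    le_of_transport_lt hN hN₀.2 (fun τ hτ => (hF_early τ hτ).2) hF_late hupper hτ⟩

namespace KAssump

variable {K : ℝ → ℝ} {ΦF : ℝ}

lemma differentiable (hK : KAssump K ΦF) : Differentiable ℝ K :=
  hK.smooth.differentiable two_ne_zero

lemma continuous_deriv (hK : KAssump K ΦF) : Continuous (deriv K) :=
  hK.smooth.continuous_deriv one_le_two

lemma exists_abs_sub_le (hK : KAssump K ΦF) : ∃ C, ∀ a b, |K b - K a| ≤ C * |b - a| := by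
  obtain ⟨C, hC⟩ := hK.bdd1
  exact ⟨C, fun a b => Convex.norm_image_sub_le_of_norm_deriv_le
    (fun x _ => hK.differentiable x) (fun x _ => hC x) convex_univ (mem_univ a) (mem_univ b)⟩

end KAssump

def solH (K : ℝ → ℝ) (Q : ℝ → ℝ → ℝ) (τ η : ℝ) : ℝ := pdEta Q τ η - K (Q τ η)

/-- The value of `solH` where the characteristic reaching `η = 1` at time `τ` enters the strip,
through `τ = 0` if `τ ≤ 1` and through `η = 0` otherwise. -/
def footH (K : ℝ → ℝ) (Q : ℝ → ℝ → ℝ) (τ : ℝ) : ℝ :=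
  solH K Q (max (τ - 1) 0) (1 - τ + max (τ - 1) 0)

namespace IsRelaxedSol

variable {ΦF : ℝ} {K Qinit Ntil : ℝ → ℝ} {Q : ℝ → ℝ → ℝ} {t t₁ t₂ x c τ : ℝ}

lemma contDiffOn_halfStrip (hsol : IsRelaxedSol K ΦF ⊤ Qinit Q Ntil) :
    ContDiffOn ℝ 1 (Function.uncurry Q) halfStrip := by
  have hreg := hsol.reg
  rwa [Ico0_top] at hreg

lemma continuousOn_Ntil (hsol : IsRelaxedSol K ΦF ⊤ Qinit Q Ntil) :
    ContinuousOn Ntil (Ici 0) :=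
  Ico0_top ▸ hsol.Ncont

lemma pde_of_mem_halfStrip (hsol : IsRelaxedSol K ΦF ⊤ Qinit Q Ntil) (hK : Continuous K)
    {p : ℝ × ℝ} (hp : p ∈ halfStrip) :
    pdTau Q p.1 p.2 + pdEta Q p.1 p.2 = Ntil p.1 + K (Q p.1 p.2) := by
  have hQ := hsol.contDiffOn_halfStrip
  refine EqOn.of_subset_closure (s := Ici 0 ×ˢ Ioo 0 1)
    (fun q hq => hsol.pde q.1 (Ico0_top ▸ hq.1) q.2 hq.2)
    ((continuousOn_pdTau hQ).add (continuousOn_pdEta hQ))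
    ((hsol.continuousOn_Ntil.comp continuousOn_fst fun _ hq => hq.1).add
      (hK.comp_continuousOn hQ.continuousOn))
    (prod_mono_right Ioo_subset_Icc_self) ?_ hp
  rw [closure_prod_eq, closure_Ici, closure_Ioo zero_ne_one]
  rfl

lemma pdTau_eta_zero (hsol : IsRelaxedSol K ΦF ⊤ Qinit Q Ntil) (ht : 0 ≤ t) : pdTau Q t 0 = 0 := by
  have hbc : EqOn (fun s => Q s 0) (fun _ => 0) (Ici 0) := fun s hs => hsol.bc s (Ico0_top ▸ hs)
  rw [pdTau, derivWithin_congr hbc (hbc ht), derivWithin_fun_const, Pi.zero_apply]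

lemma Q_one (hsol : IsRelaxedSol K ΦF ⊤ Qinit Q Ntil) (hK : KAssump K ΦF) (ht : 0 ≤ t) :
    Q t 1 = ΦF := by
  have hQ := hsol.contDiffOn_halfStrip
  have h1 : (1 : ℝ) ∈ Icc 0 1 := right_mem_Icc.2 zero_le_one
  obtain ⟨C, hC⟩ := hK.exists_abs_sub_le
  have hderiv : ∀ s ∈ Ico 0 t, HasDerivWithinAt (fun s => Q s 1 - ΦF)
      (K (Q s 1) - K ΦF) (Ici s) s := by
    intro s hs
    have hpde := hsol.pde_of_mem_halfStrip hK.smooth.continuous (mk_mem_halfStrip hs.1 h1)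
    have hN := hsol.Ndef s (Ico0_top ▸ hs.1)
    dsimp only at hpde
    exact (((hasDerivWithinAt_pdTau hQ hs.1 h1).mono (Ici_subset_Ici.2 hs.1)).sub_const ΦF)
      |>.congr_deriv (by linarith)
  have hcont : ContinuousOn (fun s => Q s 1 - ΦF) (Icc 0 t) :=
    (hQ.continuousOn.comp (continuousOn_id.prodMk continuousOn_const)
      fun s hs => mk_mem_halfStrip hs.1 h1).sub continuousOn_const
  have hzero := eq_zero_of_abs_deriv_le_mul_abs_self_of_eq_zero_right hcont hderiv
    (by rw [hsol.init 1 h1, hsol.init1, sub_self]) (fun s _ => hC ΦF (Q s 1)) t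
    (right_mem_Icc.2 ht)
  exact sub_eq_zero.1 hzero

lemma solH_initial (hsol : IsRelaxedSol K ΦF ⊤ Qinit Q Ntil) (hx : x ∈ Icc 0 1) :
    solH K Q 0 x = Hinit K Qinit x := by
  have hinit : EqOn (Q 0) Qinit (Icc 0 1) := hsol.init
  rw [solH, pdEta, derivWithin_congr hinit (hinit hx), hinit hx, Hinit]

lemma solH_eta_zero (hsol : IsRelaxedSol K ΦF ⊤ Qinit Q Ntil) (hK : Continuous K) (ht : 0 ≤ t) :
    solH K Q t 0 = Ntil t := by
  have hpde := hsol.pde_of_mem_halfStrip hK (mk_mem_halfStrip ht (left_mem_Icc.2 zero_le_one))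
  dsimp only at hpde
  rw [hsol.pdTau_eta_zero ht, hsol.bc t (Ico0_top ▸ ht)] at hpde
  rw [solH, hsol.bc t (Ico0_top ▸ ht)]
  linarith

lemma solH_eta_one (hsol : IsRelaxedSol K ΦF ⊤ Qinit Q Ntil) (hK : KAssump K ΦF) (ht : 0 ≤ t) :
    solH K Q t 1 = Ntil t := by
  rw [solH, hsol.Q_one hK ht, hsol.Ndef t (Ico0_top ▸ ht)]

lemma hasDerivAt_characteristic (hsol : IsRelaxedSol K ΦF ⊤ Qinit Q Ntil) (ht : 0 < t)
    (hc : c + t ∈ Ioo 0 1) :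
    HasDerivAt (fun s => Q s (c + s)) (Ntil t + K (Q t (c + t))) t := by
  rw [← hsol.pde t (Ico0_top ▸ ht.le) _ hc]
  exact hasDerivAt_along_diagonal hsol.contDiffOn_halfStrip ht hc

lemma sub_eq_integral_characteristic (hsol : IsRelaxedSol K ΦF ⊤ Qinit Q Ntil)
    (hK : Continuous K) (h₁ : 0 < t₁) (h₁₂ : t₁ ≤ t₂) (hc₁ : 0 < c + t₁) (hc₂ : c + t₂ < 1) :
    Q t₂ (c + t₂) - Q t₁ (c + t₁) = ∫ s in t₁..t₂, (Ntil s + K (Q s (c + s))) := by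
  have hd : ∀ s ∈ uIcc t₁ t₂, HasDerivAt (fun s => Q s (c + s)) (Ntil s + K (Q s (c + s))) s := by
    rw [uIcc_of_le h₁₂]
    exact fun s hs => hsol.hasDerivAt_characteristic (h₁.trans_le hs.1)
      ⟨by linarith [hs.1], by linarith [hs.2]⟩
  refine (intervalIntegral.integral_eq_sub_of_hasDerivAt hd
    (ContinuousOn.intervalIntegrable ?_)).symm
  rw [uIcc_of_le h₁₂] at hd ⊢
  exact (hsol.continuousOn_Ntil.mono fun s hs => h₁.le.trans hs.1).add
    (continuousOn_of_forall_continuousAt fun s hs => hK.continuousAt.comp (hd s hs).continuousAt)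

lemma hasDerivAt_integral_characteristic (hsol : IsRelaxedSol K ΦF ⊤ Qinit Q Ntil)
    (hK : KAssump K ΦF) (h₁ : 0 < t₁) (h₁₂ : t₁ ≤ t₂) (hc₁ : 0 < c + t₁) (hc₂ : c + t₂ < 1) :
    HasDerivAt (fun y => ∫ s in t₁..t₂, (Ntil s + K (Q s (y + s))))
      (∫ s in t₁..t₂, deriv K (Q s (c + s)) * pdEta Q s (c + s)) c := by
  have hQ := hsol.contDiffOn_halfStrip
  set U := Ioo (-t₁) (1 - t₂)
  have hU : U ∈ 𝓝 c := Ioo_mem_nhds (by linarith) (by linarith)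
  have hUIoo : ∀ y ∈ U, ∀ s ∈ Icc t₁ t₂, y + s ∈ Ioo 0 1 := fun y hy s hs =>
    ⟨by linarith [hy.1, hs.1], by linarith [hy.2, hs.2]⟩
  have hΙ : uIoc t₁ t₂ ⊆ Icc t₁ t₂ := (uIoc_of_le h₁₂).trans_subset Ioc_subset_Icc_self
  obtain ⟨C₁, hC₁⟩ := hK.bdd1
  obtain ⟨C₂, hC₂⟩ := (isCompact_Icc.prod isCompact_Icc).exists_bound_of_continuousOn
    ((continuousOn_pdEta hQ).mono fun p (hp : p ∈ Icc t₁ t₂ ×ˢ Icc 0 1) =>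
      mk_mem_halfStrip (h₁.le.trans hp.1.1) hp.2)
  have hF : ∀ y ∈ U, ContinuousOn (fun s => Ntil s + K (Q s (y + s))) (Icc t₁ t₂) := fun y hy =>
    (hsol.continuousOn_Ntil.mono fun s hs => h₁.le.trans hs.1).add
      (hK.smooth.continuous.comp_continuousOn (continuousOn_along_diagonal hQ.continuousOn
        h₁.le (by linarith [hy.1]) (by linarith [hy.2])))
  have hF' : ContinuousOn (fun s => deriv K (Q s (c + s)) * pdEta Q s (c + s)) (Icc t₁ t₂) :=
    (hK.continuous_deriv.comp_continuousOn (continuousOn_along_diagonal hQ.continuousOn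
      h₁.le hc₁.le hc₂.le)).mul
      (continuousOn_along_diagonal (continuousOn_pdEta hQ) h₁.le hc₁.le hc₂.le)
  refine (intervalIntegral.hasDerivAt_integral_of_dominated_loc_of_deriv_le
    (F' := fun y s => deriv K (Q s (y + s)) * pdEta Q s (y + s))
    (μ := volume) (bound := fun _ => C₁ * C₂) hU
    (eventually_of_mem hU fun y hy =>
      ((hF y hy).mono hΙ).aestronglyMeasurable measurableSet_uIoc)
    ((hF c (mem_of_mem_nhds hU)).intervalIntegrable_of_Icc h₁₂)
    ((hF'.mono hΙ).aestronglyMeasurable measurableSet_uIoc)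
    (Eventually.of_forall fun s hs y hy => ?_) intervalIntegrable_const
    (Eventually.of_forall fun s hs y hy => ?_)).2
  · rw [norm_mul]
    exact mul_le_mul (hC₁ _) (hC₂ (s, y + s) ⟨hΙ hs, Ioo_subset_Icc_self (hUIoo y hy s (hΙ hs))⟩)
      (norm_nonneg _) ((abs_nonneg _).trans (hC₁ 0))
  · exact ((hK.differentiable _).hasDerivAt.comp y ((hasDerivAt_pdEta hQ
      (h₁.le.trans (hΙ hs).1) (hUIoo y hy s (hΙ hs))).comp_add_const y s)).const_add (Ntil s)

/-- As `Q` is only `C¹`, this is obtained by differentiating the integrated characteristic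
equation with respect to the foot point `c` under the integral sign. -/
lemma pdEta_sub_eq_integral_characteristic (hsol : IsRelaxedSol K ΦF ⊤ Qinit Q Ntil)
    (hK : KAssump K ΦF) (h₁ : 0 < t₁) (h₁₂ : t₁ ≤ t₂) (hc₁ : 0 < c + t₁) (hc₂ : c + t₂ < 1) :
    pdEta Q t₂ (c + t₂) - pdEta Q t₁ (c + t₁) =
      ∫ s in t₁..t₂, deriv K (Q s (c + s)) * pdEta Q s (c + s) := by
  have hQ := hsol.contDiffOn_halfStrip
  have hends : HasDerivAt (fun y => Q t₂ (y + t₂) - Q t₁ (y + t₁))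
      (pdEta Q t₂ (c + t₂) - pdEta Q t₁ (c + t₁)) c :=
    ((hasDerivAt_pdEta hQ (h₁.le.trans h₁₂) ⟨by linarith, hc₂⟩).comp_add_const c t₂).sub
      ((hasDerivAt_pdEta hQ h₁.le ⟨hc₁, by linarith⟩).comp_add_const c t₁)
  refine hends.unique ((hsol.hasDerivAt_integral_characteristic hK h₁ h₁₂ hc₁ hc₂)
    |>.congr_of_eventuallyEq ?_)
  filter_upwards [Ioo_mem_nhds (show -t₁ < c by linarith) (show c < 1 - t₂ by linarith)]
    with y hy
  exact hsol.sub_eq_integral_characteristic hK.smooth.continuous h₁ h₁₂ (by linarith [hy.1])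
    (by linarith [hy.2])

lemma continuousOn_solH (hsol : IsRelaxedSol K ΦF ⊤ Qinit Q Ntil) (hK : Continuous K) :
    ContinuousOn (fun p : ℝ × ℝ => solH K Q p.1 p.2) halfStrip :=
  (continuousOn_pdEta hsol.contDiffOn_halfStrip).sub
    (hK.comp_continuousOn hsol.contDiffOn_halfStrip.continuousOn)

lemma hasDerivAt_pdEta_characteristic (hsol : IsRelaxedSol K ΦF ⊤ Qinit Q Ntil)
    (hK : KAssump K ΦF) (ht : 0 < t) (hc : c + t ∈ Ioo 0 1) :
    HasDerivAt (fun s => pdEta Q s (c + s)) (deriv K (Q t (c + t)) * pdEta Q t (c + t)) t := by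
  have hQ := hsol.contDiffOn_halfStrip
  obtain ⟨t₁, h₁, hc₁, ht₁⟩ : ∃ t₁, 0 < t₁ ∧ 0 < c + t₁ ∧ t₁ < t :=
    ⟨t - min t (c + t) / 2, by linarith [min_le_left t (c + t)],
      by linarith [min_le_right t (c + t), lt_min ht hc.1], by linarith [lt_min ht hc.1]⟩
  have htc : t < 1 - c := by linarith [hc.2]
  have hg : ContinuousOn (fun s => deriv K (Q s (c + s)) * pdEta Q s (c + s)) (Icc t₁ (1 - c)) :=
    continuousOn_along_diagonal (f := fun p => deriv K (Q p.1 p.2) * pdEta Q p.1 p.2)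
      ((hK.continuous_deriv.comp_continuousOn hQ.continuousOn).mul (continuousOn_pdEta hQ))
      h₁.le hc₁.le (by linarith)
  have hFTC := (intervalIntegral.integral_hasDerivAt_right
    ((hg.mono (Icc_subset_Icc le_rfl htc.le)).intervalIntegrable_of_Icc ht₁.le)
    (ContinuousOn.stronglyMeasurableAtFilter isOpen_Ioo (hg.mono Ioo_subset_Icc_self) t ⟨ht₁, htc⟩)
    (hg.continuousAt (Icc_mem_nhds ht₁ htc))).const_add (pdEta Q t₁ (c + t₁))
  refine hFTC.congr_of_eventuallyEq ?_
  filter_upwards [Ioo_mem_nhds ht₁ htc] with x hx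
  have := hsol.pdEta_sub_eq_integral_characteristic hK h₁ hx.1.le hc₁ (by linarith [hx.2])
  linarith

lemma hasDerivAt_solH_characteristic (hsol : IsRelaxedSol K ΦF ⊤ Qinit Q Ntil)
    (hK : KAssump K ΦF) (ht : 0 < t) (hc : c + t ∈ Ioo 0 1) :
    HasDerivAt (fun s => solH K Q s (c + s))
      (deriv K (Q t (c + t)) * (solH K Q t (c + t) - Ntil t)) t :=
  ((hsol.hasDerivAt_pdEta_characteristic hK ht hc).sub
    ((hK.differentiable _).hasDerivAt.comp t (hsol.hasDerivAt_characteristic ht hc))).congr_deriv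
    (by rw [solH]; ring)

lemma Ntil_zero (hsol : IsRelaxedSol K ΦF ⊤ Qinit Q Ntil) (hK : KAssump K ΦF) :
    Ntil 0 = Hinit K Qinit 1 := by
  rw [← hsol.solH_eta_one hK le_rfl, hsol.solH_initial (right_mem_Icc.2 zero_le_one)]

lemma footH_of_le_one (hsol : IsRelaxedSol K ΦF ⊤ Qinit Q Ntil) (hτ : τ ∈ Icc 0 1) :
    footH K Q τ = Hinit K Qinit (1 - τ) := by
  rw [footH, max_eq_right (by linarith [hτ.2]), add_zero]
  exact hsol.solH_initial ⟨by linarith [hτ.2], by linarith [hτ.1]⟩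

lemma footH_of_one_lt (hsol : IsRelaxedSol K ΦF ⊤ Qinit Q Ntil) (hK : Continuous K)
    (hτ : 1 < τ) : footH K Q τ = Ntil (τ - 1) := by
  rw [footH, max_eq_left (by linarith), show 1 - τ + (τ - 1) = 0 by ring]
  exact hsol.solH_eta_zero hK (by linarith)

lemma transport_footH (hsol : IsRelaxedSol K ΦF ⊤ Qinit Q Ntil) (hK : KAssump K ΦF)
    (hK' : ∀ φ, deriv K φ ≤ 0) (hτ : 0 < τ) :
    (∀ B, (∀ s ∈ Icc (max (τ - 1) 0) τ, Ntil s ≤ B) → footH K Q τ < B → Ntil τ < B) ∧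
      (∀ B, (∀ s ∈ Icc (max (τ - 1) 0) τ, B ≤ Ntil s) → B < footH K Q τ → B < Ntil τ) := by
  have hQ := hsol.contDiffOn_halfStrip
  have h₀ : 0 ≤ max (τ - 1) 0 := le_max_right _ _
  have hc₀ : 0 ≤ 1 - τ + max (τ - 1) 0 := by linarith [le_max_left (τ - 1) 0]
  have h₀τ : max (τ - 1) 0 ≤ τ := max_le (by linarith) hτ.le
  have ha := continuousOn_along_diagonal (f := fun p => deriv K (Q p.1 p.2)) (t₂ := τ)
    (hK.continuous_deriv.comp_continuousOn hQ.continuousOn) h₀ hc₀ (by linarith)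
  have hf := continuousOn_along_diagonal (hsol.continuousOn_solH hK.smooth.continuous)
    (t₂ := τ) h₀ hc₀ (by linarith)
  have hf' : ∀ t ∈ Ioo (max (τ - 1) 0) τ, HasDerivAt (fun s => solH K Q s (1 - τ + s))
      (deriv K (Q t (1 - τ + t)) * (solH K Q t (1 - τ + t) - Ntil t)) t := fun t ht =>
    hsol.hasDerivAt_solH_characteristic hK (h₀.trans_lt ht.1)
      ⟨by linarith [ht.1], by linarith [ht.2]⟩
  have hend : solH K Q τ (1 - τ + τ) = Ntil τ := by
    rw [sub_add_cancel]
    exact hsol.solH_eta_one hK hτ.le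
  refine ⟨fun B hN hB => ?_, fun B hN hB => ?_⟩ <;> rw [← hend]
  · exact lt_of_hasDerivAt_mul_sub (f := fun s => solH K Q s (1 - τ + s)) h₀τ ha
      (fun _ _ => hK' _) hf hf'
      (fun t ht => hN t (Ioo_subset_Icc_self ht)) hB
  · exact gt_of_hasDerivAt_mul_sub (f := fun s => solH K Q s (1 - τ + s)) h₀τ ha
      (fun _ _ => hK' _) hf hf'
      (fun t ht => hN t (Ioo_subset_Icc_self ht)) hB

end IsRelaxedSol

theorem stmt12_general (ΦF : ℝ) (K : ℝ → ℝ) (hK : KAssump K ΦF)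
    (hK' : ∀ φ : ℝ, deriv K φ ≤ 0)
    (Qinit : ℝ → ℝ) (Q : ℝ → ℝ → ℝ) (Ntil : ℝ → ℝ)
    (hsol : IsRelaxedSol K ΦF ⊤ Qinit Q Ntil) :
    ∀ τ : ℝ, 0 ≤ τ →
      sInf (Hinit K Qinit '' Icc (0 : ℝ) 1) ≤ Ntil τ ∧
      Ntil τ ≤ sSup (Hinit K Qinit '' Icc (0 : ℝ) 1) := by
  have hH : ContinuousOn (Hinit K Qinit) (Icc 0 1) :=
    (hsol.initReg.continuousOn_derivWithin (uniqueDiffOn_Icc zero_lt_one) le_rfl).sub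
      (hK.smooth.continuous.comp_continuousOn hsol.initReg.continuousOn)
  have hbdd := isCompact_Icc.image_of_continuousOn hH
  have hHinit : ∀ x ∈ Icc (0 : ℝ) 1, Hinit K Qinit x ∈
      Icc (sInf (Hinit K Qinit '' Icc 0 1)) (sSup (Hinit K Qinit '' Icc 0 1)) := fun x hx =>
    ⟨csInf_le hbdd.bddBelow (mem_image_of_mem _ hx), le_csSup hbdd.bddAbove (mem_image_of_mem _ hx)⟩
  intro τ hτ
  refine mem_Icc_of_transport hsol.continuousOn_Ntil ?_ (fun σ hσ => ?_)
    (fun σ hσ => hsol.footH_of_one_lt hK.smooth.continuous hσ)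
    (fun σ hσ => (hsol.transport_footH hK hK' hσ).1)
    (fun σ hσ => (hsol.transport_footH hK hK' hσ).2) hτ
  · rw [hsol.Ntil_zero hK]
    exact hHinit 1 (right_mem_Icc.2 zero_le_one)
  · rw [hsol.footH_of_le_one (Ioc_subset_Icc_self hσ)]
    exact hHinit _ ⟨by linarith [hσ.2], by linarith [hσ.1]⟩

/-- Proposition 5.4: global bounds on `Ñ` for the relaxed problem when `K' ≤ 0`. -/
theorem stmt12 (ΦF : ℝ) (hΦF : 0 < ΦF) (K : ℝ → ℝ) (hK : KAssump K ΦF)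
    (hK' : ∀ φ : ℝ, deriv K φ ≤ 0)
    (Qinit : ℝ → ℝ) (Q : ℝ → ℝ → ℝ) (Ntil : ℝ → ℝ)
    (hsol : IsRelaxedSol K ΦF ⊤ Qinit Q Ntil) :
    ∀ τ : ℝ, 0 ≤ τ →
      sInf (Hinit K Qinit '' Icc (0 : ℝ) 1) ≤ Ntil τ ∧
      Ntil τ ≤ sSup (Hinit K Qinit '' Icc (0 : ℝ) 1) :=
  stmt12_general ΦF K hK hK' Qinit Q Ntil hsol
end
end

section
/- If ∫₀^{Φ_F} 1/K(φ) dφ > 1, then there exists a steady state of the Q-system and it is unique (i.e., there is exactly one pair (Q*, N*) satisfying the steady-state conditions). If instead ∫₀^{Φ_F} 1/K(φ) dφ ≤ 1, then no steady state exists. -/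
/-!
Along a steady state `(Q, N)` the slope `Q' = K(Q) + 1/N` is positive wherever `Q` touches the
level `0` or `Φ_F`, so `Q` never leaves `[0, Φ_F]`, and separating variables gives
`∫₀^{Q(η)} dφ / (K(φ) + 1/N) = η`. At `η = 1` this says `I(1/N) = 1`, where
`I(c) = ∫₀^{Φ_F} dφ / (K(φ) + c)` decreases strictly and continuously on `[0, ∞)` from
`I(0) = ∫₀^{Φ_F} 1/K` towards `0`. So a steady state exists iff `I(0) > 1`; then `1/N` is the
unique root of `I = 1`, and `Q` is the inverse of `q ↦ ∫₀^q dφ / (K(φ) + 1/N)`.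
-/

open Real Set MeasureTheory Filter Topology
open scoped ENNReal

noncomputable section

lemma le_image_of_deriv_pos_at_level {f f' : ℝ → ℝ} {a b L : ℝ}
    (hf : ∀ x ∈ Icc a b, HasDerivWithinAt f (f' x) (Icc a b) x) (ha : L ≤ f a)
    (hL : ∀ x ∈ Icc a b, f x = L → 0 < f' x) : ∀ x ∈ Icc a b, L ≤ f x := by
  intro x hx
  have h := image_le_of_deriv_right_lt_deriv_boundary' (f := fun x => -f x)
    (f' := fun x => -f' x) (B := fun _ => -L) (B' := fun _ => 0)
    (fun y hy => (hf y hy).continuousWithinAt.neg) (fun y hy => ((hf y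
      (Ico_subset_Icc_self hy)).mono_of_mem_nhdsWithin (Icc_mem_nhdsGE_of_mem hy)).neg)
    (neg_le_neg ha) continuousOn_const (fun _ _ => hasDerivWithinAt_const _ _ _)
    (fun y hy hyL => neg_neg_of_pos (hL y (Ico_subset_Icc_self hy) (neg_inj.1 hyL))) hx
  exact neg_le_neg_iff.1 h

lemma image_le_of_deriv_pos_at_level {f f' : ℝ → ℝ} {a b U : ℝ}
    (hf : ∀ x ∈ Icc a b, HasDerivWithinAt f (f' x) (Icc a b) x) (hb : f b ≤ U)
    (hU : ∀ x ∈ Icc a b, f x = U → 0 < f' x) : ∀ x ∈ Icc a b, f x ≤ U := by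
  have hrefl : MapsTo (fun x => a + b - x) (Icc a b) (Icc a b) :=
    fun x hx => ⟨by linarith [hx.2], by linarith [hx.1]⟩
  have h := le_image_of_deriv_pos_at_level (f := fun x => -f (a + b - x))
    (f' := fun x => f' (a + b - x)) (L := -U) (fun x hx => by
      have h := ((hf _ (hrefl hx)).comp x ((hasDerivWithinAt_id x _).const_sub (a + b))
        hrefl).neg
      rwa [mul_neg_one, neg_neg] at h)
    (by simpa using hb) (fun x hx hxU => hU _ (hrefl hx) (neg_inj.1 hxU))
  intro x hx
  simpa using h _ (hrefl hx)

/-- `K` frozen outside `[0, Φ_F]`, so that the speed `K + c` stays positive on all of `ℝ`. -/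
def clampK (K : ℝ → ℝ) (ΦF x : ℝ) : ℝ := K (max 0 (min ΦF x))

/-- The time a solution of `Q' = K(Q) + c` starting at `0` needs to reach the level `q`. -/
def travelTime (K : ℝ → ℝ) (ΦF c q : ℝ) : ℝ := ∫ φ in (0 : ℝ)..q, (clampK K ΦF φ + c)⁻¹

section TravelTime

variable {K : ℝ → ℝ} {ΦF c : ℝ}

lemma clampK_of_mem {x : ℝ} (hx : x ∈ Icc 0 ΦF) : clampK K ΦF x = K x := by
  rw [clampK, min_eq_right hx.2, max_eq_right hx.1]

lemma max_min_mem_Icc (hΦ : 0 ≤ ΦF) (x : ℝ) : max 0 (min ΦF x) ∈ Icc 0 ΦF :=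
  ⟨le_max_left _ _, max_le hΦ (min_le_left _ _)⟩

lemma continuous_clampK (hΦ : 0 ≤ ΦF) (hK : ContinuousOn K (Icc 0 ΦF)) :
    Continuous (clampK K ΦF) :=
  hK.comp_continuous (by fun_prop) (max_min_mem_Icc hΦ)

lemma clampK_pos (hΦ : 0 ≤ ΦF) (hKpos : ∀ φ ∈ Icc 0 ΦF, 0 < K φ) (x : ℝ) :
    0 < clampK K ΦF x :=
  hKpos _ (max_min_mem_Icc hΦ x)

lemma continuous_inv_clampK_add (hΦ : 0 ≤ ΦF) (hK : ContinuousOn K (Icc 0 ΦF))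
    (hKpos : ∀ φ ∈ Icc 0 ΦF, 0 < K φ) (hc : 0 ≤ c) :
    Continuous fun x => (clampK K ΦF x + c)⁻¹ :=
  ((continuous_clampK hΦ hK).add continuous_const).inv₀ fun x =>
    (add_pos_of_pos_of_nonneg (clampK_pos hΦ hKpos x) hc).ne'

lemma hasDerivAt_travelTime (hΦ : 0 ≤ ΦF) (hK : ContinuousOn K (Icc 0 ΦF))
    (hKpos : ∀ φ ∈ Icc 0 ΦF, 0 < K φ) (hc : 0 ≤ c) (q : ℝ) :
    HasDerivAt (travelTime K ΦF c) (clampK K ΦF q + c)⁻¹ q :=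
  (continuous_inv_clampK_add hΦ hK hKpos hc).integral_hasStrictDerivAt 0 q |>.hasDerivAt

lemma travelTime_zero_right : travelTime K ΦF c 0 = 0 := intervalIntegral.integral_same

lemma strictMono_travelTime (hΦ : 0 ≤ ΦF) (hK : ContinuousOn K (Icc 0 ΦF))
    (hKpos : ∀ φ ∈ Icc 0 ΦF, 0 < K φ) (hc : 0 ≤ c) : StrictMono (travelTime K ΦF c) :=
  strictMono_of_hasDerivAt_pos (hasDerivAt_travelTime hΦ hK hKpos hc) fun q =>
    inv_pos.2 (add_pos_of_pos_of_nonneg (clampK_pos hΦ hKpos q) hc)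

lemma surjective_travelTime (hΦ : 0 ≤ ΦF) (hK : ContinuousOn K (Icc 0 ΦF))
    (hKpos : ∀ φ ∈ Icc 0 ΦF, 0 < K φ) (hc : 0 ≤ c) :
    Function.Surjective (travelTime K ΦF c) := by
  obtain ⟨M, hM⟩ : BddAbove (range (clampK K ΦF)) :=
    (isCompact_Icc.bddAbove_image hK).mono (by
      rintro _ ⟨x, rfl⟩; exact ⟨_, max_min_mem_Icc hΦ x, rfl⟩)
  have hMc : 0 < M + c := by linarith [clampK_pos hΦ hKpos 0, hM ⟨0, rfl⟩]
  have hderiv := hasDerivAt_travelTime hΦ hK hKpos hc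
  -- the speed is at most `M + c`, so the travel time grows at least linearly
  have hmono : Monotone fun q => travelTime K ΦF c q - (M + c)⁻¹ * q := by
    refine monotone_of_hasDerivAt_nonneg (fun q => (hderiv q).sub ((hasDerivAt_id' q).const_mul _))
      fun q => ?_
    rw [Pi.zero_apply, mul_one, sub_nonneg]
    exact inv_anti₀ (add_pos_of_pos_of_nonneg (clampK_pos hΦ hKpos q) hc)
      (by linarith [hM ⟨q, rfl⟩])
  have hzero : travelTime K ΦF c 0 - (M + c)⁻¹ * 0 = 0 := by
    rw [travelTime_zero_right, mul_zero, sub_zero]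
  refine Continuous.surjective (continuous_iff_continuousAt.2 fun q => (hderiv q).continuousAt)
    (tendsto_atTop_mono' atTop ?_ (tendsto_id.const_mul_atTop (inv_pos.2 hMc)))
    (tendsto_atBot_mono' atBot ?_ (tendsto_id.const_mul_atBot (inv_pos.2 hMc)))
  · filter_upwards [eventually_ge_atTop 0] with q hq
    have := hmono hq
    simp only [id] at this ⊢
    linarith
  · filter_upwards [eventually_le_atBot 0] with q hq
    have := hmono hq
    simp only [id] at this ⊢
    linarith

lemma continuousOn_travelTime_param (hΦ : 0 ≤ ΦF) (hK : ContinuousOn K (Icc 0 ΦF))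
    (hKpos : ∀ φ ∈ Icc 0 ΦF, 0 < K φ) (q : ℝ) :
    ContinuousOn (fun c => travelTime K ΦF c q) (Ici 0) := by
  rw [continuousOn_iff_continuous_domRestrict]
  refine intervalIntegral.continuous_parametric_intervalIntegral_of_continuous'
    (f := fun (c : Ici (0 : ℝ)) φ => (clampK K ΦF φ + c)⁻¹) ?_ 0 q
  exact ((continuous_clampK hΦ hK).comp continuous_snd |>.add
    (continuous_subtype_val.comp continuous_fst)).inv₀ fun p =>
      (add_pos_of_pos_of_nonneg (clampK_pos hΦ hKpos p.2) p.1.2).ne'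

lemma strictAntiOn_travelTime_param (hΦ : 0 < ΦF) (hK : ContinuousOn K (Icc 0 ΦF))
    (hKpos : ∀ φ ∈ Icc 0 ΦF, 0 < K φ) :
    StrictAntiOn (fun c => travelTime K ΦF c ΦF) (Ici 0) := by
  intro c hc c' hc' hcc'
  have hlt : ∀ φ, (clampK K ΦF φ + c')⁻¹ < (clampK K ΦF φ + c)⁻¹ := fun φ =>
    inv_strictAnti₀ (add_pos_of_pos_of_nonneg (clampK_pos hΦ.le hKpos φ) hc) (by linarith)
  exact intervalIntegral.integral_lt_integral_of_continuousOn_of_le_of_exists_lt hΦ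
    (continuous_inv_clampK_add hΦ.le hK hKpos hc').continuousOn
    (continuous_inv_clampK_add hΦ.le hK hKpos hc).continuousOn
    (fun φ _ => (hlt φ).le) ⟨0, left_mem_Icc.2 hΦ.le, hlt 0⟩

lemma travelTime_le_div (hΦ : 0 ≤ ΦF) (hK : ContinuousOn K (Icc 0 ΦF))
    (hKpos : ∀ φ ∈ Icc 0 ΦF, 0 < K φ) (hc : 0 < c) {q : ℝ} (hq : 0 ≤ q) :
    travelTime K ΦF c q ≤ q / c := by
  have := intervalIntegral.integral_mono_on hq
    ((continuous_inv_clampK_add hΦ hK hKpos hc.le).intervalIntegrable 0 q)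
    (intervalIntegrable_const (μ := volume)) fun φ _ =>
      inv_anti₀ hc (le_add_of_nonneg_left (clampK_pos hΦ hKpos φ).le)
  rwa [intervalIntegral.integral_const, smul_eq_mul, sub_zero, ← div_eq_mul_inv] at this

lemma exists_travelTime_eq_one (hΦ : 0 < ΦF) (hK : ContinuousOn K (Icc 0 ΦF))
    (hKpos : ∀ φ ∈ Icc 0 ΦF, 0 < K φ) (h1 : 1 < travelTime K ΦF 0 ΦF) :
    ∃ c, 0 < c ∧ travelTime K ΦF c ΦF = 1 := by
  have hbig : travelTime K ΦF (ΦF + 1) ΦF ≤ 1 :=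
    (travelTime_le_div hΦ.le hK hKpos (by linarith) hΦ.le).trans
      ((div_le_one (by linarith)).2 (by linarith))
  obtain ⟨c, hc, hc1⟩ := intermediate_value_Icc' (by linarith)
    ((continuousOn_travelTime_param hΦ.le hK hKpos ΦF).mono Icc_subset_Ici_self)
    ⟨hbig, h1.le⟩
  exact ⟨c, hc.1.lt_of_ne (by rintro rfl; exact h1.ne' hc1), hc1⟩

lemma travelTime_zero_eq_integral (hΦ : 0 ≤ ΦF) :
    travelTime K ΦF 0 ΦF = ∫ φ in (0 : ℝ)..ΦF, 1 / K φ := by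
  refine intervalIntegral.integral_congr fun φ hφ => ?_
  rw [uIcc_of_le hΦ] at hφ
  simp only [clampK_of_mem hφ, add_zero, one_div]

end TravelTime

section SteadyState

variable {K Q : ℝ → ℝ} {ΦF N : ℝ}

namespace IsSteadyState

lemma hasDerivWithinAt (hs : IsSteadyState K ΦF Q N) :
    ∀ η ∈ Icc (0 : ℝ) 1, HasDerivWithinAt Q (K (Q η) + 1 / N) (Icc 0 1) η := fun η hη => by
  rw [← hs.2.2.1 η hη]
  exact (hs.1.differentiableOn one_ne_zero η hη).hasDerivWithinAt

/-- `Q` can cross the levels `0` and `Φ_F` only upwards, where its slope `K + 1/N` is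
positive. -/
lemma mapsTo (hK0 : 0 < K 0) (hKΦ : 0 < K ΦF) (hs : IsSteadyState K ΦF Q N) :
    MapsTo Q (Icc 0 1) (Icc 0 ΦF) := by
  have hN := one_div_pos.2 hs.2.1
  intro η hη
  exact ⟨le_image_of_deriv_pos_at_level hs.hasDerivWithinAt hs.2.2.2.1.ge
      (fun x _ hx => by rw [hx]; exact add_pos hK0 hN) η hη,
    image_le_of_deriv_pos_at_level hs.hasDerivWithinAt hs.2.2.2.2.le
      (fun x _ hx => by rw [hx]; exact add_pos hKΦ hN) η hη⟩

lemma travelTime_eq (hΦ : 0 ≤ ΦF) (hK : ContinuousOn K (Icc 0 ΦF))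
    (hKpos : ∀ φ ∈ Icc 0 ΦF, 0 < K φ) (hs : IsSteadyState K ΦF Q N) :
    ∀ η ∈ Icc (0 : ℝ) 1, travelTime K ΦF (1 / N) (Q η) = η := by
  have hN := one_div_pos.2 hs.2.1
  have hmaps := hs.mapsTo (hKpos 0 ⟨le_rfl, hΦ⟩) (hKpos ΦF ⟨hΦ, le_rfl⟩)
  have hderiv : ∀ η ∈ Icc (0 : ℝ) 1,
      HasDerivWithinAt (fun η => travelTime K ΦF (1 / N) (Q η)) 1 (Icc 0 1) η := by
    intro η hη
    have h := (hasDerivAt_travelTime hΦ hK hKpos hN.le (Q η)).comp_hasDerivWithinAt η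
      (hs.hasDerivWithinAt η hη)
    rwa [clampK_of_mem (hmaps hη), inv_mul_cancel₀ (add_pos (hKpos _ (hmaps hη)) hN).ne'] at h
  refine eq_of_has_deriv_right_eq (g := id) (f' := fun _ => 1)
    (fun η hη => (hderiv η (Ico_subset_Icc_self hη)).mono_of_mem_nhdsWithin
      (Icc_mem_nhdsGE_of_mem hη))
    (fun η _ => hasDerivWithinAt_id η _) (fun η hη => (hderiv η hη).continuousWithinAt)
    continuousOn_id ?_
  rw [hs.2.2.2.1, travelTime_zero_right, id]

lemma travelTime_eq_one (hΦ : 0 ≤ ΦF) (hK : ContinuousOn K (Icc 0 ΦF))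
    (hKpos : ∀ φ ∈ Icc 0 ΦF, 0 < K φ) (hs : IsSteadyState K ΦF Q N) :
    travelTime K ΦF (1 / N) ΦF = 1 := by
  have h := hs.travelTime_eq hΦ hK hKpos 1 (right_mem_Icc.2 zero_le_one)
  rwa [hs.2.2.2.2] at h

lemma eq_of_isSteadyState (hΦ : 0 < ΦF) (hK : ContinuousOn K (Icc 0 ΦF))
    (hKpos : ∀ φ ∈ Icc 0 ΦF, 0 < K φ) {Q' : ℝ → ℝ} {N' : ℝ} (hs : IsSteadyState K ΦF Q N)
    (hs' : IsSteadyState K ΦF Q' N') : N = N' := by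
  have h := strictAntiOn_travelTime_param hΦ hK hKpos |>.injOn (one_div_pos.2 hs.2.1).le
    (one_div_pos.2 hs'.2.1).le <| (hs.travelTime_eq_one hΦ.le hK hKpos).trans
      (hs'.travelTime_eq_one hΦ.le hK hKpos).symm
  rwa [one_div, one_div, inv_inj] at h

lemma eqOn_of_isSteadyState (hΦ : 0 ≤ ΦF) (hK : ContinuousOn K (Icc 0 ΦF))
    (hKpos : ∀ φ ∈ Icc 0 ΦF, 0 < K φ) {Q' : ℝ → ℝ} (hs : IsSteadyState K ΦF Q N)
    (hs' : IsSteadyState K ΦF Q' N) : EqOn Q Q' (Icc 0 1) := fun η hη =>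
  (strictMono_travelTime hΦ hK hKpos (one_div_pos.2 hs.2.1).le).injective <|
    (hs.travelTime_eq hΦ hK hKpos η hη).trans (hs'.travelTime_eq hΦ hK hKpos η hη).symm

lemma one_lt_integral (hΦ : 0 < ΦF) (hK : ContinuousOn K (Icc 0 ΦF))
    (hKpos : ∀ φ ∈ Icc 0 ΦF, 0 < K φ) (hs : IsSteadyState K ΦF Q N) :
    1 < ∫ φ in (0 : ℝ)..ΦF, 1 / K φ := by
  rw [← travelTime_zero_eq_integral hΦ.le, ← hs.travelTime_eq_one hΦ.le hK hKpos]
  exact strictAntiOn_travelTime_param hΦ hK hKpos self_mem_Ici (one_div_pos.2 hs.2.1).le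
    (one_div_pos.2 hs.2.1)

end IsSteadyState

lemma exists_isSteadyState (hΦ : 0 ≤ ΦF) (hK : ContinuousOn K (Icc 0 ΦF))
    (hKpos : ∀ φ ∈ Icc 0 ΦF, 0 < K φ) {c : ℝ} (hc : 0 < c) (h1 : travelTime K ΦF c ΦF = 1) :
    ∃ Q, IsSteadyState K ΦF Q (1 / c) := by
  let e := (strictMono_travelTime hΦ hK hKpos hc.le).orderIsoOfSurjective _
    (surjective_travelTime hΦ hK hKpos hc.le)
  have hderiv : ∀ η, HasDerivAt e.symm (clampK K ΦF (e.symm η) + c) η := fun η => by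
    simpa using (hasDerivAt_travelTime hΦ hK hKpos hc.le (e.symm η)).of_local_left_inverse
      e.symm.continuous.continuousAt
      (inv_pos.2 (add_pos (clampK_pos hΦ hKpos _) hc)).ne'
      (Eventually.of_forall e.apply_symm_apply)
  have hQ0 : e.symm 0 = 0 := e.symm_apply_eq.2 travelTime_zero_right.symm
  have hQ1 : e.symm 1 = ΦF := e.symm_apply_eq.2 h1.symm
  have hmaps : MapsTo e.symm (Icc 0 1) (Icc 0 ΦF) := fun η hη =>
    ⟨hQ0 ▸ e.symm.monotone hη.1, hQ1 ▸ e.symm.monotone hη.2⟩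
  have hC1 : ContDiff ℝ 1 e.symm := by
    refine contDiff_one_iff_deriv.2 ⟨fun η => (hderiv η).differentiableAt, ?_⟩
    rw [funext fun η => (hderiv η).deriv]
    exact ((continuous_clampK hΦ hK).comp e.symm.continuous).add continuous_const
  refine ⟨e.symm, hC1.contDiffOn, one_div_pos.2 hc, fun η hη => ?_, hQ0, hQ1⟩
  rw [(hderiv η).hasDerivWithinAt.derivWithin (uniqueDiffOn_Icc one_pos η hη),
    clampK_of_mem (hmaps hη), one_div_one_div]

end SteadyState

/-- Proposition 5.8: sharp dichotomy for existence/uniqueness of the steady state. -/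
theorem stmt14 (ΦF : ℝ) (hΦF : 0 < ΦF) (K : ℝ → ℝ) (hK : KAssump K ΦF) :
    ((1 < ∫ φ in (0 : ℝ)..ΦF, 1 / K φ) →
      ∃ (Qs : ℝ → ℝ) (Ns : ℝ), IsSteadyState K ΦF Qs Ns ∧
        ∀ (Qs' : ℝ → ℝ) (Ns' : ℝ), IsSteadyState K ΦF Qs' Ns' →
          (∀ η ∈ Icc (0 : ℝ) 1, Qs' η = Qs η) ∧ Ns' = Ns) ∧
    ((∫ φ in (0 : ℝ)..ΦF, 1 / K φ) ≤ 1 →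
      ¬ ∃ (Qs : ℝ → ℝ) (Ns : ℝ), IsSteadyState K ΦF Qs Ns) := by
  have hKc : ContinuousOn K (Icc 0 ΦF) := hK.smooth.continuous.continuousOn
  refine ⟨fun h1 => ?_, fun h1 ⟨Q, N, hs⟩ => h1.not_gt (hs.one_lt_integral hΦF hKc hK.pos)⟩
  rw [← travelTime_zero_eq_integral hΦF.le] at h1
  obtain ⟨c, hc, hc1⟩ := exists_travelTime_eq_one hΦF hKc hK.pos h1
  obtain ⟨Q, hQ⟩ := exists_isSteadyState hΦF.le hKc hK.pos hc hc1
  refine ⟨Q, 1 / c, hQ, fun Q' N' hQ' => ?_⟩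
  obtain rfl := hQ'.eq_of_isSteadyState hΦF hKc hK.pos hQ
  exact ⟨hQ'.eqOn_of_isSteadyState hΦF.le hKc hK.pos hQ, rfl⟩
end
end

section
/- Suppose ∫₀^{Φ_F} 1/K(φ) dφ ≤ 1. Then every classical solution of the Q-system blows up in finite time; more precisely, its maximal existence time τ* satisfies τ* ≤ ∫₀^{Φ_F} 1/K(φ) dφ ≤ 1 < ∞. -/
open Real Set MeasureTheory Filter Topology
open scoped ENNReal

noncomputable section

/-!
Suppose a solution lives beyond `I = ∫₀^{Φ_F} 1/K`; then it is `C¹` on `[0, I] × [0, 1]`.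
At `η = 1` the equation and the definition of `N` give the autonomous ODE
`∂_τ Q(τ, 1) = K(Q(τ, 1)) - K(Φ_F)` with `Q(0, 1) = Φ_F`, so `Q(τ, 1) = Φ_F`, and monotonicity
in `η` keeps `Q` in `[0, Φ_F]`. Since `I ≤ 1`, the characteristic `η = τ` stays in the domain
up to time `I`, and `g(τ) = Q(τ, τ)` satisfies `g' = 1/N + K(g) > K(g)`, `g(0) = 0`.
Comparing with the flow of `K` gives `∫₀^{g(I)} 1/K > I`, whereas `g(I) ≤ Φ_F` gives
`∫₀^{g(I)} 1/K ≤ I`.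
-/

section SliceDerivatives

variable {𝕜 F : Type*} [NontriviallyNormedField 𝕜] [NormedAddCommGroup F] [NormedSpace 𝕜 F]
  {f : 𝕜 × 𝕜 → F} {f' : 𝕜 × 𝕜 →L[𝕜] F} {s t : Set 𝕜} {x y : 𝕜}

theorem HasFDerivWithinAt.hasDerivWithinAt_prodMk_left
    (hf : HasFDerivWithinAt f f' (s ×ˢ t) (x, y)) (hy : y ∈ t) :
    HasDerivWithinAt (fun x => f (x, y)) (f' (1, 0)) s x :=
  hf.comp_hasDerivWithinAt x ((hasDerivWithinAt_id x s).prodMk (hasDerivWithinAt_const x s y))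
    fun _ hx => mk_mem_prod hx hy

theorem HasFDerivWithinAt.hasDerivWithinAt_prodMk_right
    (hf : HasFDerivWithinAt f f' (s ×ˢ t) (x, y)) (hx : x ∈ s) :
    HasDerivWithinAt (fun y => f (x, y)) (f' (0, 1)) t y :=
  hf.comp_hasDerivWithinAt y ((hasDerivWithinAt_const y t x).prodMk (hasDerivWithinAt_id y t))
    fun _ hy => mk_mem_prod hx hy

end SliceDerivatives

theorem intervalIntegrable_one_div_of_pos {K : ℝ → ℝ} {c d x y : ℝ}
    (hK : ContinuousOn K (Icc c d)) (hKpos : ∀ z ∈ Icc c d, 0 < K z)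
    (hx : x ∈ Icc c d) (hy : y ∈ Icc c d) :
    IntervalIntegrable (fun z => 1 / K z) volume x y :=
  ((continuousOn_const.div hK fun z hz => (hKpos z hz).ne').mono
    (uIcc_subset_Icc hx hy)).intervalIntegrable

theorem sub_lt_integral_one_div_of_lt_deriv {K g g' : ℝ → ℝ} {a b c d : ℝ} (hab : a < b)
    (hK : Continuous K) (hKpos : ∀ x ∈ Icc c d, 0 < K x) (hgc : ContinuousOn g (Icc a b))
    (hgmem : MapsTo g (Icc a b) (Icc c d)) (hg : ∀ s ∈ Ioo a b, HasDerivAt g (g' s) s)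
    (hlt : ∀ s ∈ Ioo a b, K (g s) < g' s) :
    b - a < ∫ x in g a..g b, 1 / K x := by
  have ha := hgmem (left_mem_Icc.2 hab.le)
  have hb := hgmem (right_mem_Icc.2 hab.le)
  have hint : ∀ {x y}, x ∈ Icc c d → y ∈ Icc c d →
      IntervalIntegrable (fun z => 1 / K z) volume x y :=
    intervalIntegrable_one_div_of_pos hK.continuousOn hKpos
  have hc : c ∈ Icc c d := left_mem_Icc.2 (ha.1.trans ha.2)
  have hF : ∀ y ∈ Icc c d, HasDerivAt (fun y => ∫ x in c..y, 1 / K x) (1 / K y) y :=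
    fun y hy => intervalIntegral.integral_hasDerivAt_right (hint hc hy)
      (hK.measurable.const_div 1).aestronglyMeasurable.stronglyMeasurableAtFilter
      (continuousAt_const.div hK.continuousAt (hKpos y hy).ne')
  have hFc : ContinuousOn (fun y => ∫ x in c..y, 1 / K x) (Icc c d) := by
    simpa [uIcc_of_le hc.2] using
      intervalIntegral.continuousOn_primitive_interval' (hint hc (right_mem_Icc.2 hc.2))
        left_mem_uIcc
  have hmono : StrictMonoOn (fun t => (∫ x in c..g t, 1 / K x) - t) (Icc a b) := by
    refine strictMonoOn_of_hasDerivWithinAt_pos (convex_Icc a b)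
      ((hFc.comp hgc hgmem).sub continuousOn_id) (f' := fun s => 1 / K (g s) * g' s - 1)
      (fun s hs => ?_) fun s hs => ?_ <;> rw [interior_Icc] at hs
    · rw [interior_Icc]
      exact (((hF _ (hgmem (Ioo_subset_Icc_self hs))).comp s (hg s hs)).sub
        (hasDerivAt_id s)).hasDerivWithinAt
    · have hKg := hKpos _ (hgmem (Ioo_subset_Icc_self hs))
      rw [sub_pos, one_div, inv_mul_eq_div, one_lt_div hKg]
      exact hlt s hs
  have := hmono (left_mem_Icc.2 hab.le) (right_mem_Icc.2 hab.le) hab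
  rw [← intervalIntegral.integral_interval_sub_left (hint hc hb) (hint hc ha)]
  simp only at this
  linarith

theorem KAssump.exists_lipschitzWith {K : ℝ → ℝ} {ΦF : ℝ} (hK : KAssump K ΦF) :
    ∃ C, LipschitzWith C K := by
  obtain ⟨C, hC⟩ := hK.bdd1
  refine ⟨C.toNNReal, lipschitzWith_of_nnnorm_deriv_le
    (hK.smooth.differentiable (by norm_num)) fun x => ?_⟩
  rw [← NNReal.coe_le_coe, coe_nnnorm, Real.norm_eq_abs, Real.coe_toNNReal']
  exact (hC x).trans (le_max_left _ _)

namespace IsQSol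

variable {K : ℝ → ℝ} {ΦF b τ η : ℝ} {T : ℝ≥0∞} {Qinit : ℝ → ℝ} {Q : ℝ → ℝ → ℝ} {N : ℝ → ℝ}

theorem contDiffOn_rect (hsol : IsQSol K ΦF T Qinit Q N) (hbT : Icc 0 b ⊆ Ico0 T) :
    ContDiffOn ℝ 1 (Function.uncurry Q) (Icc 0 b ×ˢ Icc 0 1) :=
  hsol.reg.mono (prod_mono hbT subset_rfl)

theorem hasFDerivWithinAt_rect (hsol : IsQSol K ΦF T Qinit Q N) (hbT : Icc 0 b ⊆ Ico0 T)
    {p : ℝ × ℝ} (hp : p ∈ Icc 0 b ×ˢ Icc 0 1) :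
    HasFDerivWithinAt (Function.uncurry Q)
      (fderivWithin ℝ (Function.uncurry Q) (Icc 0 b ×ˢ Icc 0 1) p) (Icc 0 b ×ˢ Icc 0 1) p :=
  ((hsol.contDiffOn_rect hbT).differentiableOn one_ne_zero p hp).hasFDerivWithinAt

theorem hasDerivWithinAt_tau (hsol : IsQSol K ΦF T Qinit Q N) (hbT : Icc 0 b ⊆ Ico0 T)
    (hτ : τ ∈ Ico 0 b) (hη : η ∈ Icc 0 1) :
    HasDerivWithinAt (fun s => Q s η)
      (fderivWithin ℝ (Function.uncurry Q) (Icc 0 b ×ˢ Icc 0 1) (τ, η) (1, 0)) (Ici 0) τ := by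
  refine ((hsol.hasFDerivWithinAt_rect hbT ⟨Ico_subset_Icc_self hτ, hη⟩
    ).hasDerivWithinAt_prodMk_left hη).mono_of_mem_nhdsWithin ?_
  rw [← Ici_inter_Iic]
  exact inter_mem_nhdsWithin _ (Iic_mem_nhds hτ.2)

theorem pdTau_eq (hsol : IsQSol K ΦF T Qinit Q N) (hbT : Icc 0 b ⊆ Ico0 T)
    (hτ : τ ∈ Ico 0 b) (hη : η ∈ Icc 0 1) :
    pdTau Q τ η = fderivWithin ℝ (Function.uncurry Q) (Icc 0 b ×ˢ Icc 0 1) (τ, η) (1, 0) :=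
  (hsol.hasDerivWithinAt_tau hbT hτ hη).derivWithin (uniqueDiffOn_Ici 0 τ hτ.1)

theorem pdEta_eq (hsol : IsQSol K ΦF T Qinit Q N) (hbT : Icc 0 b ⊆ Ico0 T)
    (hτ : τ ∈ Icc 0 b) (hη : η ∈ Icc 0 1) :
    pdEta Q τ η = fderivWithin ℝ (Function.uncurry Q) (Icc 0 b ×ˢ Icc 0 1) (τ, η) (0, 1) :=
  ((hsol.hasFDerivWithinAt_rect hbT ⟨hτ, hη⟩).hasDerivWithinAt_prodMk_right hτ).derivWithin
    (uniqueDiffOn_Icc_zero_one η hη)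

/-- The equation is only imposed for `η ∈ (0, 1)`; it extends to `η ∈ {0, 1}` by continuity of the
derivative. -/
theorem fderivWithin_apply_one_one (hsol : IsQSol K ΦF T Qinit Q N) (hbT : Icc 0 b ⊆ Ico0 T)
    (hb : 0 < b) (hK : Continuous K) (hτ : τ ∈ Ico 0 b) (hη : η ∈ Icc 0 1) :
    fderivWithin ℝ (Function.uncurry Q) (Icc 0 b ×ˢ Icc 0 1) (τ, η) (1, 1) =
      1 / N τ + K (Q τ η) := by
  have hQ := hsol.contDiffOn_rect hbT
  have hR : UniqueDiffOn ℝ (Icc 0 b ×ˢ Icc (0 : ℝ) 1) :=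
    (uniqueDiffOn_Icc hb).prod (uniqueDiffOn_Icc one_pos)
  have hslice : ContinuousOn (fun η : ℝ => (τ, η)) (Icc 0 1) := by fun_prop
  have hmaps : MapsTo (fun η : ℝ => (τ, η)) (Icc 0 1) (Icc 0 b ×ˢ Icc 0 1) :=
    fun _ hη => ⟨Ico_subset_Icc_self hτ, hη⟩
  refine EqOn.of_subset_closure (s := Ioo 0 1) (fun η hη => ?_)
    (((hQ.continuousOn_fderivWithin hR le_rfl).comp hslice hmaps).clm_apply continuousOn_const)
    (continuousOn_const.add (hK.comp_continuousOn (hQ.continuousOn.comp hslice hmaps)))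
    Ioo_subset_Icc_self (by rw [closure_Ioo zero_ne_one]) hη
  have hpde := hsol.pde τ (hbT (Ico_subset_Icc_self hτ)) η hη
  rw [hsol.pdTau_eq hbT hτ (Ioo_subset_Icc_self hη),
    hsol.pdEta_eq hbT (Ico_subset_Icc_self hτ) (Ioo_subset_Icc_self hη), ← map_add] at hpde
  simpa using hpde

theorem right_boundary_eq (hsol : IsQSol K ΦF T Qinit Q N) (hbT : Icc 0 b ⊆ Ico0 T)
    (hb : 0 < b) {C : NNReal} (hK : LipschitzWith C K) (hτ : τ ∈ Icc 0 b) : Q τ 1 = ΦF := by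
  have hone : (1 : ℝ) ∈ Icc 0 1 := right_mem_Icc.2 zero_le_one
  have hderiv : ∀ t ∈ Ico 0 b,
      HasDerivWithinAt (fun t => Q t 1) (K (Q t 1) - K ΦF) (Ici t) t := by
    intro t ht
    have hN := hsol.Ndef t (hbT (Ico_subset_Icc_self ht))
    have hD := hsol.fderivWithin_apply_one_one hbT hb hK.continuous ht hone
    rw [hsol.pdEta_eq hbT (Ico_subset_Icc_self ht) hone] at hN
    rw [show ((1 : ℝ), (1 : ℝ)) = (1, 0) + (0, 1) by simp, map_add] at hD
    exact ((hsol.hasDerivWithinAt_tau hbT ht hone).mono (Ici_subset_Ici.2 ht.1)).congr_deriv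
      (by linarith)
  refine ODE_solution_unique_of_mem_Icc_right (v := fun _ y => K y - K ΦF) (s := fun _ => univ)
    (f := fun t => Q t 1) (g := fun _ => ΦF)
    (fun _ _ => (hK.sub (LipschitzWith.const (K ΦF))).lipschitzOnWith)
    ((hsol.contDiffOn_rect hbT).continuousOn.comp
      (continuous_id.prodMk continuous_const).continuousOn fun t ht => ⟨ht, hone⟩)
    hderiv (fun _ _ => mem_univ _) continuousOn_const
    (fun t _ => by simpa using hasDerivWithinAt_const t (Ici t) ΦF) (fun _ _ => mem_univ _)
    (by rw [hsol.init 1 hone, hsol.init1]) hτ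

theorem mapsTo_diag (hsol : IsQSol K ΦF T Qinit Q N) (hbT : Icc 0 b ⊆ Ico0 T)
    (hb : 0 < b) (hb1 : b ≤ 1) {C : NNReal} (hK : LipschitzWith C K) :
    MapsTo (fun s => Q s s) (Icc 0 b) (Icc 0 ΦF) := by
  intro s hs
  have hs1 : s ∈ Icc (0 : ℝ) 1 := ⟨hs.1, hs.2.trans hb1⟩
  have hmono := hsol.mono s (hbT hs)
  constructor
  · simpa [hsol.bc s (hbT hs)] using hmono (left_mem_Icc.2 zero_le_one) hs1 hs.1
  · simpa [hsol.right_boundary_eq hbT hb hK hs] using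
      hmono hs1 (right_mem_Icc.2 zero_le_one) hs1.2

theorem continuousOn_diag (hsol : IsQSol K ΦF T Qinit Q N) (hbT : Icc 0 b ⊆ Ico0 T)
    (hb1 : b ≤ 1) : ContinuousOn (fun t => Q t t) (Icc 0 b) :=
  (hsol.contDiffOn_rect hbT).continuousOn.comp (continuous_id.prodMk continuous_id).continuousOn
    fun _ hs => ⟨hs, hs.1, hs.2.trans hb1⟩

theorem hasDerivAt_diag (hsol : IsQSol K ΦF T Qinit Q N) (hbT : Icc 0 b ⊆ Ico0 T)
    (hb1 : b ≤ 1) (hK : Continuous K) {s : ℝ} (hs : s ∈ Ioo 0 b) :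
    HasDerivAt (fun t => Q t t) (1 / N s + K (Q s s)) s := by
  have hmem : Icc 0 b ×ˢ Icc 0 1 ∈ 𝓝 (s, s) :=
    prod_mem_nhds (Icc_mem_nhds hs.1 hs.2) (Icc_mem_nhds hs.1 (hs.2.trans_le hb1))
  rw [← hsol.fderivWithin_apply_one_one hbT (hs.1.trans hs.2) hK (Ioo_subset_Ico_self hs)
    ⟨hs.1.le, hs.2.le.trans hb1⟩]
  exact ((hsol.hasFDerivWithinAt_rect hbT (mem_of_mem_nhds hmem)).hasFDerivAt hmem
    ).comp_hasDerivAt (f := fun t => (t, t)) s ((hasDerivAt_id' s).prodMk (hasDerivAt_id' s))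

end IsQSol

/-- Theorem 6.5: blow-up of every classical solution under strong interaction
(`∫₀^{Φ_F} 1/K ≤ 1`), with the explicit bound `τ* ≤ ∫₀^{Φ_F} 1/K ≤ 1`. -/
theorem stmt18 (ΦF : ℝ) (hΦF : 0 < ΦF) (K : ℝ → ℝ) (hK : KAssump K ΦF)
    (hint : (∫ φ in (0 : ℝ)..ΦF, 1 / K φ) ≤ 1) :
    ∀ (T : ℝ≥0∞) (Qinit : ℝ → ℝ) (Q : ℝ → ℝ → ℝ) (N : ℝ → ℝ),
      IsQSol K ΦF T Qinit Q N →
      T ≤ ENNReal.ofReal (∫ φ in (0 : ℝ)..ΦF, 1 / K φ) ∧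
      ENNReal.ofReal (∫ φ in (0 : ℝ)..ΦF, 1 / K φ) ≤ 1 := by
  intro T Qinit Q N hsol
  set I := ∫ φ in (0 : ℝ)..ΦF, 1 / K φ
  have hKc : Continuous K := hK.smooth.continuous
  have h0 : (0 : ℝ) ∈ Icc 0 ΦF := left_mem_Icc.2 hΦF.le
  have hintK : ∀ {x y}, x ∈ Icc 0 ΦF → y ∈ Icc 0 ΦF →
      IntervalIntegrable (fun φ => 1 / K φ) volume x y :=
    intervalIntegrable_one_div_of_pos hKc.continuousOn hK.pos
  have hI : 0 < I := intervalIntegral.intervalIntegral_pos_of_pos_on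
    (hintK h0 (right_mem_Icc.2 hΦF.le))
    (fun x hx => one_div_pos.2 (hK.pos x (Ioo_subset_Icc_self hx))) hΦF
  refine ⟨?_, (ENNReal.ofReal_le_ofReal hint).trans ENNReal.ofReal_one.le⟩
  by_contra! hT
  have hIT : Icc 0 I ⊆ Ico0 T := fun τ hτ => ⟨hτ.1, (ENNReal.ofReal_le_ofReal hτ.2).trans_lt hT⟩
  obtain ⟨C, hKlip⟩ := hK.exists_lipschitzWith
  have hdiag := hsol.mapsTo_diag hIT hI hint hKlip
  have hQI := hdiag (right_mem_Icc.2 hI.le)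
  have hlt : I - 0 < ∫ φ in Q 0 0..Q I I, 1 / K φ :=
    sub_lt_integral_one_div_of_lt_deriv hI hKc hK.pos (hsol.continuousOn_diag hIT hint) hdiag
      (fun s hs => hsol.hasDerivAt_diag hIT hint hKc hs)
      fun s hs => lt_add_of_pos_left _ (one_div_pos.2 (hsol.Npos s (hIT (Ioo_subset_Icc_self hs))))
  have hle : ∫ φ in (0 : ℝ)..Q I I, 1 / K φ ≤ I := by
    rw [← sub_nonneg, intervalIntegral.integral_interval_sub_left
      (hintK h0 (right_mem_Icc.2 hΦF.le)) (hintK h0 hQI)]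
    exact intervalIntegral.integral_nonneg hQI.2
      fun x hx => (one_div_pos.2 (hK.pos x ⟨hQI.1.trans hx.1, hx.2⟩)).le
  rw [hsol.init 0 (left_mem_Icc.2 zero_le_one), hsol.init0] at hlt
  linarith
end
end

section
/- Let (Q,N) be a classical solution of the Q-system on [0,T). Then for every m ∈ C¹([0,Φ_F]) with m(0) = 0 and all τ ∈ (0,T): d/dτ ∫₀¹ m(Q(τ,η)) dη = ( ∫₀¹ m'(Q(τ,η))·K(Q(τ,η)) dη − m(Φ_F) ) + (1/N(τ)) · ∫₀¹ m'(Q(τ,η)) dη. -/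
/-!
By continuity the PDE holds up to `η = 1`, where together with the definition of `N` it says that
`y(τ) = Q(τ, 1)` solves the Lipschitz ODE `y' = K(y) - K(Φ_F)` with `y(0) = Φ_F`; hence
`Q(τ, 1) = Φ_F`, and by monotonicity `Q` takes values in `[0, Φ_F]`, where `m` is `C¹`.
Differentiating under the integral sign and substituting `∂_τ Q = 1/N + K(Q) - ∂_η Q`, the
transport term `∫₀¹ m'(Q) ∂_η Q` is `m(Q(τ, 1)) - m(Q(τ, 0)) = m(Φ_F) - m(0) = m(Φ_F)`.
-/

open Real Set MeasureTheory Filter Topology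
open scoped ENNReal

noncomputable section

open Function

theorem isOpen_setOf_ofReal_lt (T : ℝ≥0∞) : IsOpen {s : ℝ | ENNReal.ofReal s < T} :=
  isOpen_lt ENNReal.continuous_ofReal continuous_const

theorem Ico0_mem_nhds {T : ℝ≥0∞} {τ : ℝ} (hτ : 0 < τ) (hτT : ENNReal.ofReal τ < T) :
    Ico0 T ∈ 𝓝 τ :=
  inter_mem (Ici_mem_nhds hτ) ((isOpen_setOf_ofReal_lt T).mem_nhds hτT)

theorem uniqueDiffOn_Ico0 (T : ℝ≥0∞) : UniqueDiffOn ℝ (Ico0 T) :=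
  (uniqueDiffOn_Ici 0).inter (isOpen_setOf_ofReal_lt T)

theorem Icc_subset_Ico0 {T : ℝ≥0∞} {s : ℝ} (hs : s ∈ Ico0 T) : Icc 0 s ⊆ Ico0 T :=
  fun _ ht => ⟨ht.1, (ENNReal.ofReal_le_ofReal ht.2).trans_lt hs.2⟩

section PartialDerivatives

variable {f : ℝ → ℝ → ℝ} {D : ℝ × ℝ →L[ℝ] ℝ} {s t : Set ℝ} {x y : ℝ}

theorem HasFDerivWithinAt.hasDerivWithinAt_uncurry_left
    (hf : HasFDerivWithinAt (uncurry f) D (s ×ˢ t) (x, y)) (hy : y ∈ t) :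
    HasDerivWithinAt (f · y) (D (1, 0)) s x := by
  exact hf.comp_hasDerivWithinAt x
    ((hasDerivAt_id' x).prodMk (hasDerivAt_const x y)).hasDerivWithinAt
    fun _ hx => mk_mem_prod hx hy

theorem HasFDerivWithinAt.hasDerivWithinAt_uncurry_right
    (hf : HasFDerivWithinAt (uncurry f) D (s ×ˢ t) (x, y)) (hx : x ∈ s) :
    HasDerivWithinAt (f x) (D (0, 1)) t y := by
  exact hf.comp_hasDerivWithinAt y
    ((hasDerivAt_const y x).prodMk (hasDerivAt_id' y)).hasDerivWithinAt
    fun _ hy => mk_mem_prod hx hy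

end PartialDerivatives

theorem hasDerivAt_intervalIntegral_of_continuousOn {f f' : ℝ → ℝ → ℝ} {s : Set ℝ}
    {a b τ : ℝ} (hs : IsOpen s) (hτ : τ ∈ s) (hab : a ≤ b)
    (hf : ContinuousOn (uncurry f) (s ×ˢ Icc a b))
    (hf' : ContinuousOn (uncurry f') (s ×ˢ Icc a b))
    (hderiv : ∀ t ∈ s, ∀ x ∈ Icc a b, HasDerivAt (f · x) (f' t x) t) :
    HasDerivAt (fun t => ∫ x in a..b, f t x) (∫ x in a..b, f' τ x) τ := by
  have hmeas : ∀ g : ℝ → ℝ → ℝ, ContinuousOn (uncurry g) (s ×ˢ Icc a b) → ∀ t ∈ s,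
      AEStronglyMeasurable (g t) (volume.restrict (uIoc a b)) := fun g hg t ht =>
    ((hg.uncurry_left t ht).intervalIntegrable_of_Icc hab).def'.aestronglyMeasurable
  obtain ⟨ε, hε, hεs⟩ := Metric.nhds_basis_closedBall.mem_iff.1 (hs.mem_nhds hτ)
  obtain ⟨C, hC⟩ := ((isCompact_closedBall τ ε).prod isCompact_Icc).exists_bound_of_continuousOn
    (hf'.mono (prod_mono hεs subset_rfl))
  have hball : Metric.ball τ ε ⊆ s := Metric.ball_subset_closedBall.trans hεs
  refine (intervalIntegral.hasDerivAt_integral_of_dominated_loc_of_deriv_le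
    (bound := fun _ => C) (Metric.ball_mem_nhds τ hε)
    (eventually_of_mem (hs.mem_nhds hτ) (hmeas f hf))
    ((hf.uncurry_left τ hτ).intervalIntegrable_of_Icc hab) (hmeas f' hf' τ hτ)
    (ae_of_all _ fun x hx t ht => hC (t, x) ⟨Metric.ball_subset_closedBall ht, ?_⟩)
    intervalIntegrable_const
    (ae_of_all _ fun x hx t ht => hderiv t (hball ht) x ?_)).2
  all_goals rw [uIoc_of_le hab] at hx; exact Ioc_subset_Icc_self hx

theorem integral_derivWithin_comp_mul_eq_sub {m g g' : ℝ → ℝ} {s : Set ℝ} {a b : ℝ}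
    (hab : a ≤ b) (hs : UniqueDiffOn ℝ s) (hm : ContDiffOn ℝ 1 m s)
    (hg : ∀ x ∈ Icc a b, HasDerivWithinAt g (g' x) (Icc a b) x)
    (hg' : ContinuousOn g' (Icc a b)) (hgs : MapsTo g (Icc a b) s) :
    ∫ x in a..b, derivWithin m s (g x) * g' x = m (g b) - m (g a) := by
  have hgc : ContinuousOn g (Icc a b) := fun x hx => (hg x hx).continuousWithinAt
  refine intervalIntegral.integral_eq_sub_of_hasDerivAt_of_le hab (hm.continuousOn.comp hgc hgs)
    (fun x hx => ?_)
    ((((hm.continuousOn_derivWithin hs le_rfl).comp hgc hgs).mul hg').intervalIntegrable_of_Icc hab)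
  have hx' := Ioo_subset_Icc_self hx
  exact (((hm.differentiableOn one_ne_zero _ (hgs hx')).hasDerivWithinAt.comp x (hg x hx')
    hgs).hasDerivAt (Icc_mem_nhds hx.1 hx.2))

theorem KAssump.exists_lipschitzWith_sub_const {K : ℝ → ℝ} {ΦF : ℝ} (hK : KAssump K ΦF)
    (c : ℝ) : ∃ L, LipschitzWith L (fun x => K x - c) := by
  obtain ⟨C, hC⟩ := hK.bdd1
  refine ⟨‖C‖₊, lipschitzWith_of_nnnorm_deriv_le
    ((hK.smooth.differentiable two_ne_zero).sub_const c) fun x => ?_⟩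
  rw [deriv_sub_const, ← NNReal.coe_le_coe, coe_nnnorm, coe_nnnorm, Real.norm_eq_abs]
  exact (hC x).trans (le_abs_self C)

namespace IsQSol

variable {K : ℝ → ℝ} {ΦF : ℝ} {T : ℝ≥0∞} {Qinit : ℝ → ℝ} {Q : ℝ → ℝ → ℝ} {N : ℝ → ℝ}
  {τ η : ℝ}

theorem hasFDerivWithinAt (hsol : IsQSol K ΦF T Qinit Q N) (hτ : τ ∈ Ico0 T)
    (hη : η ∈ Icc 0 1) :
    HasFDerivWithinAt (uncurry Q) (fderivWithin ℝ (uncurry Q) (Ico0 T ×ˢ Icc 0 1) (τ, η))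
      (Ico0 T ×ˢ Icc 0 1) (τ, η) :=
  (hsol.reg.differentiableOn one_ne_zero _ ⟨hτ, hη⟩).hasFDerivWithinAt

theorem hasDerivWithinAt_Ici_fderivWithin (hsol : IsQSol K ΦF T Qinit Q N) (hτ : τ ∈ Ico0 T)
    (hη : η ∈ Icc 0 1) :
    HasDerivWithinAt (Q · η) (fderivWithin ℝ (uncurry Q) (Ico0 T ×ˢ Icc 0 1) (τ, η) (1, 0))
      (Ici 0) τ :=
  (hasDerivWithinAt_inter ((isOpen_setOf_ofReal_lt T).mem_nhds hτ.2)).1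
    ((hsol.hasFDerivWithinAt hτ hη).hasDerivWithinAt_uncurry_left hη)

theorem pdTau_eq_fderivWithin (hsol : IsQSol K ΦF T Qinit Q N) (hτ : τ ∈ Ico0 T)
    (hη : η ∈ Icc 0 1) :
    pdTau Q τ η = fderivWithin ℝ (uncurry Q) (Ico0 T ×ˢ Icc 0 1) (τ, η) (1, 0) :=
  (hsol.hasDerivWithinAt_Ici_fderivWithin hτ hη).derivWithin (uniqueDiffOn_Ici 0 τ hτ.1)

theorem pdEta_eq_fderivWithin (hsol : IsQSol K ΦF T Qinit Q N) (hτ : τ ∈ Ico0 T)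
    (hη : η ∈ Icc 0 1) :
    pdEta Q τ η = fderivWithin ℝ (uncurry Q) (Ico0 T ×ˢ Icc 0 1) (τ, η) (0, 1) :=
  ((hsol.hasFDerivWithinAt hτ hη).hasDerivWithinAt_uncurry_right hτ).derivWithin
    (uniqueDiffOn_Icc zero_lt_one η hη)

theorem hasDerivWithinAt_pdTau (hsol : IsQSol K ΦF T Qinit Q N) (hτ : τ ∈ Ico0 T)
    (hη : η ∈ Icc 0 1) : HasDerivWithinAt (Q · η) (pdTau Q τ η) (Ici 0) τ :=
  hsol.pdTau_eq_fderivWithin hτ hη ▸ hsol.hasDerivWithinAt_Ici_fderivWithin hτ hη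

theorem hasDerivWithinAt_pdEta (hsol : IsQSol K ΦF T Qinit Q N) (hτ : τ ∈ Ico0 T)
    (hη : η ∈ Icc 0 1) : HasDerivWithinAt (Q τ) (pdEta Q τ η) (Icc 0 1) η :=
  hsol.pdEta_eq_fderivWithin hτ hη ▸
    (hsol.hasFDerivWithinAt hτ hη).hasDerivWithinAt_uncurry_right hτ

theorem continuousOn_fderivWithin_apply (hsol : IsQSol K ΦF T Qinit Q N) (v : ℝ × ℝ) :
    ContinuousOn (fun p => fderivWithin ℝ (uncurry Q) (Ico0 T ×ˢ Icc 0 1) p v)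
      (Ico0 T ×ˢ Icc 0 1) :=
  (hsol.reg.continuousOn_fderivWithin ((uniqueDiffOn_Ico0 T).prod (uniqueDiffOn_Icc zero_lt_one))
    le_rfl).clm_apply continuousOn_const

theorem continuousOn_pdTau (hsol : IsQSol K ΦF T Qinit Q N) :
    ContinuousOn (uncurry (pdTau Q)) (Ico0 T ×ˢ Icc 0 1) :=
  (hsol.continuousOn_fderivWithin_apply (1, 0)).congr fun _ hp =>
    hsol.pdTau_eq_fderivWithin hp.1 hp.2

theorem continuousOn_pdEta (hsol : IsQSol K ΦF T Qinit Q N) :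
    ContinuousOn (uncurry (pdEta Q)) (Ico0 T ×ˢ Icc 0 1) :=
  (hsol.continuousOn_fderivWithin_apply (0, 1)).congr fun _ hp =>
    hsol.pdEta_eq_fderivWithin hp.1 hp.2

theorem pde_of_mem_Icc (hsol : IsQSol K ΦF T Qinit Q N) (hK : Continuous K) (hτ : τ ∈ Ico0 T)
    (hη : η ∈ Icc 0 1) : pdTau Q τ η + pdEta Q τ η = 1 / N τ + K (Q τ η) :=
  EqOn.of_subset_closure (hsol.pde τ hτ)
    ((hsol.continuousOn_pdTau.uncurry_left τ hτ).add (hsol.continuousOn_pdEta.uncurry_left τ hτ))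
    (continuousOn_const.add (hK.comp_continuousOn (hsol.reg.continuousOn.uncurry_left τ hτ)))
    Ioo_subset_Icc_self (closure_Ioo zero_ne_one).ge hη

theorem hasDerivWithinAt_apply_one (hsol : IsQSol K ΦF T Qinit Q N) (hK : Continuous K)
    (hτ : τ ∈ Ico0 T) : HasDerivWithinAt (Q · 1) (K (Q τ 1) - K ΦF) (Ici 0) τ := by
  have hpde := hsol.pde_of_mem_Icc hK hτ (right_mem_Icc.2 zero_le_one)
  have hN := hsol.Ndef τ hτ
  convert hsol.hasDerivWithinAt_pdTau hτ (right_mem_Icc.2 zero_le_one) using 1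
  linarith

theorem apply_one (hsol : IsQSol K ΦF T Qinit Q N) (hK : KAssump K ΦF) (hτ : τ ∈ Ico0 T) :
    Q τ 1 = ΦF := by
  obtain ⟨L, hL⟩ := hK.exists_lipschitzWith_sub_const (K ΦF)
  have hsub := Icc_subset_Ico0 hτ
  refine ODE_solution_unique (v := fun _ x => K x - K ΦF) (fun _ => hL)
    (hsol.reg.continuousOn.uncurry_right 1 (right_mem_Icc.2 zero_le_one) |>.mono hsub)
    (fun t ht => (hsol.hasDerivWithinAt_apply_one hK.smooth.continuous
      (hsub (Ico_subset_Icc_self ht))).mono (Ici_subset_Ici.2 ht.1))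
    continuousOn_const (fun t _ => by simpa using hasDerivWithinAt_const t (Ici t) ΦF) ?_
    (right_mem_Icc.2 hτ.1)
  rw [hsol.init 1 (right_mem_Icc.2 zero_le_one), hsol.init1]

theorem mem_Icc (hsol : IsQSol K ΦF T Qinit Q N) (hK : KAssump K ΦF) (hτ : τ ∈ Ico0 T)
    (hη : η ∈ Icc 0 1) : Q τ η ∈ Icc 0 ΦF := by
  have hmono := hsol.mono τ hτ
  constructor
  · simpa [hsol.bc τ hτ] using hmono (left_mem_Icc.2 zero_le_one) hη hη.1
  · simpa [hsol.apply_one hK hτ] using hmono hη (right_mem_Icc.2 zero_le_one) hη.2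

theorem hasDerivAt_integral_comp (hsol : IsQSol K ΦF T Qinit Q N) (hK : KAssump K ΦF)
    (hΦF : 0 < ΦF) {m : ℝ → ℝ} (hm : ContDiffOn ℝ 1 m (Icc 0 ΦF)) (hτ : 0 < τ)
    (hτT : ENNReal.ofReal τ < T) :
    HasDerivAt (fun s => ∫ η in (0 : ℝ)..1, m (Q s η))
      (∫ η in (0 : ℝ)..1, derivWithin m (Icc 0 ΦF) (Q τ η) * pdTau Q τ η) τ := by
  have hmaps : MapsTo (uncurry Q) (Ico0 T ×ˢ Icc 0 1) (Icc 0 ΦF) :=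
    fun p hp => hsol.mem_Icc hK hp.1 hp.2
  refine hasDerivAt_intervalIntegral_of_continuousOn (f := fun t η => m (Q t η))
    (f' := fun t η => derivWithin m (Icc 0 ΦF) (Q t η) * pdTau Q t η) isOpen_interior
    (mem_interior_iff_mem_nhds.2 (Ico0_mem_nhds hτ hτT)) zero_le_one
    ((hm.continuousOn.comp hsol.reg.continuousOn hmaps).mono (prod_mono interior_subset le_rfl))
    ((((hm.continuousOn_derivWithin (uniqueDiffOn_Icc hΦF) le_rfl).comp hsol.reg.continuousOn
      hmaps).mul hsol.continuousOn_pdTau).mono (prod_mono interior_subset le_rfl))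
    fun t ht x hx => ?_
  have ht' := interior_subset ht
  exact ((hm.differentiableOn one_ne_zero _ (hsol.mem_Icc hK ht' hx)).hasDerivWithinAt.comp t
    ((hsol.hasDerivWithinAt_pdTau ht' hx).mono fun _ hs => hs.1)
    fun _ hs => hsol.mem_Icc hK hs hx).hasDerivAt (mem_interior_iff_mem_nhds.1 ht)

theorem integral_mul_pdTau (hsol : IsQSol K ΦF T Qinit Q N) (hK : Continuous K)
    {g : ℝ → ℝ} (hg : ContinuousOn g (Icc 0 1)) (hτ : τ ∈ Ico0 T) :
    ∫ η in (0 : ℝ)..1, g η * pdTau Q τ η =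
      (∫ η in (0 : ℝ)..1, g η * K (Q τ η)) + 1 / N τ * (∫ η in (0 : ℝ)..1, g η)
        - ∫ η in (0 : ℝ)..1, g η * pdEta Q τ η := by
  have hgK : ContinuousOn (fun η => g η * K (Q τ η)) (Icc 0 1) :=
    hg.mul (hK.comp_continuousOn (hsol.reg.continuousOn.uncurry_left τ hτ))
  have hgN : ContinuousOn (fun η => 1 / N τ * g η) (Icc 0 1) := continuousOn_const.mul hg
  have hgη : ContinuousOn (fun η => g η * pdEta Q τ η) (Icc 0 1) :=
    hg.mul (hsol.continuousOn_pdEta.uncurry_left τ hτ)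
  have hpde : ∫ η in (0 : ℝ)..1, g η * pdTau Q τ η =
      ∫ η in (0 : ℝ)..1, (g η * K (Q τ η) + 1 / N τ * g η - g η * pdEta Q τ η) := by
    refine intervalIntegral.integral_congr fun η hη => ?_
    rw [uIcc_of_le zero_le_one] at hη
    simp only [eq_sub_of_add_eq (hsol.pde_of_mem_Icc hK hτ hη)]
    ring
  rw [hpde, intervalIntegral.integral_sub, intervalIntegral.integral_add,
    intervalIntegral.integral_const_mul]
  · exact hgK.intervalIntegrable_of_Icc zero_le_one
  · exact hgN.intervalIntegrable_of_Icc zero_le_one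
  · exact (hgK.add hgN).intervalIntegrable_of_Icc zero_le_one
  · exact hgη.intervalIntegrable_of_Icc zero_le_one

theorem integral_derivWithin_comp_mul_pdEta (hsol : IsQSol K ΦF T Qinit Q N)
    (hK : KAssump K ΦF) (hΦF : 0 < ΦF) {m : ℝ → ℝ} (hm : ContDiffOn ℝ 1 m (Icc 0 ΦF))
    (hτ : τ ∈ Ico0 T) :
    ∫ η in (0 : ℝ)..1, derivWithin m (Icc 0 ΦF) (Q τ η) * pdEta Q τ η = m ΦF - m 0 := by
  rw [integral_derivWithin_comp_mul_eq_sub zero_le_one (uniqueDiffOn_Icc hΦF) hm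
    (fun _ hη => hsol.hasDerivWithinAt_pdEta hτ hη)
    (hsol.continuousOn_pdEta.uncurry_left τ hτ) fun _ hη => hsol.mem_Icc hK hτ hη,
    hsol.apply_one hK hτ, hsol.bc τ hτ]

end IsQSol

/-- Lemma 6.6: evolution of moments of the solution. -/
theorem stmt19 (ΦF : ℝ) (hΦF : 0 < ΦF) (K : ℝ → ℝ) (hK : KAssump K ΦF)
    (T : ℝ≥0∞) (Qinit : ℝ → ℝ) (Q : ℝ → ℝ → ℝ) (N : ℝ → ℝ)
    (hsol : IsQSol K ΦF T Qinit Q N)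
    (m : ℝ → ℝ) (hm : ContDiffOn ℝ 1 m (Icc 0 ΦF)) (hm0 : m 0 = 0)
    (τ : ℝ) (hτ : 0 < τ) (hτT : ENNReal.ofReal τ < T) :
    HasDerivAt (fun s => ∫ η in (0 : ℝ)..1, m (Q s η))
      ((∫ η in (0 : ℝ)..1, derivWithin m (Icc 0 ΦF) (Q τ η) * K (Q τ η)) - m ΦF
        + (1 / N τ) * ∫ η in (0 : ℝ)..1, derivWithin m (Icc 0 ΦF) (Q τ η)) τ := by
  have hτ' : τ ∈ Ico0 T := ⟨hτ.le, hτT⟩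
  have hm' : ContinuousOn (fun η => derivWithin m (Icc 0 ΦF) (Q τ η)) (Icc 0 1) :=
    (hm.continuousOn_derivWithin (uniqueDiffOn_Icc hΦF) le_rfl).comp
      (hsol.reg.continuousOn.uncurry_left τ hτ') fun _ hη => hsol.mem_Icc hK hτ' hη
  convert hsol.hasDerivAt_integral_comp hK hΦF hm hτ hτT using 1
  rw [hsol.integral_mul_pdTau hK.smooth.continuous hm' hτ',
    hsol.integral_derivWithin_comp_mul_pdEta hK hΦF hm hτ', hm0]
  ring
end
end
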